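/- arXiv:2107.02054 — 8 statements merged into one kernel-verified Lean document; each statement's English description precedes it below -/
import Mathlib

section
/- Let A be the adjacency matrix of the path graph P_n and let i ∈ {1,...,n}. There exists an eigenvector v of A whose i-th entry equals 0 if and only if gcd(i, n+1) ≠ 1. -/
def cheb (μ : ℝ) : ℕ → ℝ
  | 0 => 0
  | 1 => 1
  | (j+2) => μ * cheb μ (j+1) - cheb μ j

lemma cheb_add (μ : ℝ) (p : ℕ) (hp : cheb μ p = 0) :
    ∀ a, cheb μ (a + p) = cheb μ (p+1) * cheb μ a := by
  intro a
  induction a using Nat.strong_induction_on with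
  | _ a ih =>
    match a with
    | 0 => simp [cheb, hp]
    | 1 => rw [Nat.add_comm 1 p]; simp [cheb]
    | (a+2) =>
      have h1 := ih (a+1) (by omega)
      have h2 := ih a (by omega)
      have e : a + 2 + p = (a + p) + 2 := by omega
      have e1 : a + 1 + p = (a + p) + 1 := by omega
      rw [e, cheb, ← e1, h1, h2]
      rw [show cheb μ (a+2) = μ * cheb μ (a+1) - cheb μ a from rfl]
      ring

lemma cheb_succ_ne (μ : ℝ) (p : ℕ) (hp0 : 0 < p) (hp : cheb μ p = 0) :
    cheb μ (p+1) ≠ 0 := by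
  intro hp1
  have key : ∀ k, k ≤ p + 1 → cheb μ (p + 1 - k) = 0 := by
    intro k
    induction k using Nat.strong_induction_on with
    | _ k ih =>
      intro hk
      match k with
      | 0 => simpa using hp1
      | 1 => simpa using hp
      | (k+2) =>
        have h1 := ih (k+1) (by omega) (by omega)
        have h2 := ih k (by omega) (by omega)
        have e2 : p + 1 - k = (p + 1 - (k+2)) + 2 := by omega
        have e1 : p + 1 - (k+1) = (p + 1 - (k+2)) + 1 := by omega
        rw [e2, cheb] at h2
        rw [e1] at h1
        rw [h1] at h2
        linarith
  have := key p (by omega)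
  have e : p + 1 - p = 1 := by omega
  rw [e] at this
  simp [cheb] at this

lemma cheb_dvd (μ : ℝ) (p : ℕ) (hp0 : 0 < p) (hp : cheb μ p = 0)
    (hmin : ∀ q, 0 < q → q < p → cheb μ q ≠ 0) :
    ∀ m, 0 < m → cheb μ m = 0 → p ∣ m := by
  intro m
  induction m using Nat.strong_induction_on with
  | _ m ih =>
    intro hm0 hm
    rcases lt_trichotomy m p with h | h | h
    · exact absurd hm (hmin m hm0 h)
    · exact h ▸ dvd_refl p
    · have e : m = (m - p) + p := by omega
      rw [e, cheb_add μ p hp] at hm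
      have h2 : cheb μ (m - p) = 0 := by
        rcases mul_eq_zero.mp hm with h' | h'
        · exact absurd h' (cheb_succ_ne μ p hp0 hp)
        · exact h'
      rcases Nat.eq_zero_or_pos (m - p) with h0 | h0
      · exact ⟨1, by omega⟩
      · obtain ⟨c, hc⟩ := ih (m - p) (by omega) h0 h2
        exact ⟨c + 1, by rw [Nat.mul_succ]; omega⟩


lemma ind_sum (n m : ℕ) (f : ℕ → ℝ) :
    ∑ j : Fin n, (if j.1 = m then f j.1 else 0) = if m < n then f m else 0 := by
  by_cases h : m < n
  · rw [if_pos h, Finset.sum_eq_single ⟨m, h⟩]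
    · simp
    · intro b _ hb
      rw [if_neg]
      intro hc; exact hb (by ext; exact hc)
    · simp
  · rw [if_neg h]
    apply Finset.sum_eq_zero
    intro j _
    rw [if_neg]
    omega

lemma sum_lemma (n : ℕ) (V : ℕ → ℝ) (h0 : V 0 = 0) (hn : V (n+1) = 0) (r : Fin n) :
    ∑ j : Fin n, (if r.1+1 = j.1 ∨ j.1+1 = r.1 then (1:ℝ) else 0) * V (j.1+1)
      = V r.1 + V (r.1+2) := by
  have split : ∀ j : Fin n, (if r.1+1 = j.1 ∨ j.1+1 = r.1 then (1:ℝ) else 0) * V (j.1+1)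
      = (if j.1 = r.1 - 1 ∧ 0 < r.1 then V (j.1+1) else 0)
        + (if j.1 = r.1+1 then V (j.1+1) else 0) := by
    intro j
    rcases eq_or_ne (j.1+1) r.1 with hL | hL
    · rw [if_pos (Or.inr hL), if_pos ⟨by omega, by omega⟩, if_neg (by omega)]
      ring
    · rcases eq_or_ne (r.1+1) j.1 with hR | hR
      · rw [if_pos (Or.inl hR), if_neg (by omega), if_pos hR.symm]
        ring
      · rw [if_neg (by omega : ¬(r.1+1 = j.1 ∨ j.1+1 = r.1)), if_neg (by omega),
          if_neg (by omega)]
        ring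
  rw [Finset.sum_congr rfl (fun j _ => split j), Finset.sum_add_distrib]
  have e2 : (∑ j : Fin n, if j.1 = r.1+1 then V (j.1+1) else 0) = V (r.1+2) := by
    have := ind_sum n (r.1+1) (fun m => V (m+1))
    rw [this]
    by_cases h : r.1 + 1 < n
    · rw [if_pos h]
    · rw [if_neg h]
      have h2 : r.1 + 2 = n + 1 := by omega
      rw [h2, hn]
  rw [e2]
  congr 1
  by_cases hr : 0 < r.1
  · have : (∑ j : Fin n, if j.1 = r.1 - 1 ∧ 0 < r.1 then V (j.1+1) else 0)
        = ∑ j : Fin n, if j.1 = r.1 - 1 then V (j.1+1) else 0 := by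
      apply Finset.sum_congr rfl
      intro j _
      simp [hr]
    rw [this, ind_sum n (r.1-1) (fun m => V (m+1)), if_pos (by omega)]
    congr 1
    omega
  · have hr0 : r.1 = 0 := by omega
    rw [hr0, h0]
    apply Finset.sum_eq_zero
    intro j _
    rw [if_neg]
    omega

/-- The adjacency matrix of the path graph `P_n` on vertices `1,…,n`
(vertex `i` is represented by `⟨i-1⟩ : Fin n`). -/
def pathAdj (n : ℕ) : Matrix (Fin n) (Fin n) ℝ :=
  Matrix.of fun i j => if i.1 + 1 = j.1 ∨ j.1 + 1 = i.1 then 1 else 0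

lemma mulVec_iff (n : ℕ) (μ : ℝ) (v : Fin n → ℝ) (V : ℕ → ℝ) (hV0 : V 0 = 0)
    (hVn : V (n+1) = 0) (hVv : ∀ k : Fin n, v k = V (k.1+1)) :
    (pathAdj n).mulVec v = μ • v ↔ ∀ j < n, V j + V (j+2) = μ * V (j+1) := by
  have key : ∀ r : Fin n, (pathAdj n).mulVec v r = V r.1 + V (r.1+2) := by
    intro r
    have e1 : (pathAdj n).mulVec v r
        = ∑ j : Fin n, (if r.1+1 = j.1 ∨ j.1+1 = r.1 then (1:ℝ) else 0) * V (j.1+1) := by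
      simp only [Matrix.mulVec, dotProduct, pathAdj, Matrix.of_apply]
      exact Finset.sum_congr rfl (fun j _ => by rw [hVv j])
    rw [e1, sum_lemma n V hV0 hVn r]
  constructor
  · intro h j hj
    have := congrFun h ⟨j, hj⟩
    rw [key ⟨j, hj⟩] at this
    rw [this, Pi.smul_apply, smul_eq_mul, hVv ⟨j, hj⟩]
  · intro h
    funext r
    rw [key r, Pi.smul_apply, smul_eq_mul, hVv r]
    exact h r.1 r.2

lemma sin_div_zero (d m : ℕ) (hd : 0 < d) (h : d ∣ m) :
    Real.sin (m * (Real.pi / d)) = 0 := by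
  obtain ⟨a, ha⟩ := h
  rw [ha]
  push_cast
  have e : ((d:ℝ) * a) * (Real.pi / d) = a * Real.pi := by
    have hd' : (d:ℝ) ≠ 0 := by positivity
    field_simp
  rw [e, Real.sin_nat_mul_pi]

/-- There is an eigenvector of the adjacency matrix of `P_n` vanishing at vertex `i`
iff `gcd(i, n+1) ≠ 1`. -/
theorem stmt2 (n : ℕ) (i : Fin n) :
    (∃ (μ : ℝ) (v : Fin n → ℝ), v ≠ 0 ∧ (pathAdj n).mulVec v = μ • v ∧ v i = 0) ↔
      Nat.gcd (i.1 + 1) (n + 1) ≠ 1 := by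
  constructor
  · rintro ⟨μ, v, hv, hm, hvi⟩
    set V : ℕ → ℝ := fun j => if h : 0 < j ∧ j ≤ n then v ⟨j-1, by omega⟩ else 0 with hVdef
    have hV0 : V 0 = 0 := by simp [hVdef]
    have hVn1 : V (n+1) = 0 := by simp [hVdef]
    have hVv : ∀ k : Fin n, v k = V (k.1+1) := by
      intro k
      have h1 : V (k.1+1) = v ⟨k.1+1-1, by omega⟩ := dif_pos ⟨by omega, by omega⟩
      rw [h1]
      congr 1
    have hrec := (mulVec_iff n μ v V hV0 hVn1 hVv).mp hm
    have hVt : ∀ j, j ≤ n + 1 → V j = V 1 * cheb μ j := by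
      intro j
      induction j using Nat.strong_induction_on with
      | _ j ih =>
        intro hj
        match j with
        | 0 => simp [hV0, cheb]
        | 1 => simp [cheb]
        | (j+2) =>
          have h1 := ih (j+1) (by omega) (by omega)
          have h2 := ih j (by omega) (by omega)
          have hr := hrec j (by omega)
          rw [show cheb μ (j+2) = μ * cheb μ (j+1) - cheb μ j from rfl]
          rw [h1, h2] at hr
          linarith [hr]
    have hV1 : V 1 ≠ 0 := by
      intro h
      apply hv
      funext k
      rw [hVv k, hVt (k.1+1) (by omega), h]
      simp
    have ht_i : cheb μ (i.1+1) = 0 := by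
      have := hVt (i.1+1) (by omega)
      rw [← hVv i, hvi] at this
      exact (mul_eq_zero.mp this.symm).resolve_left hV1
    have ht_n : cheb μ (n+1) = 0 := by
      have := hVt (n+1) le_rfl
      rw [hVn1] at this
      exact (mul_eq_zero.mp this.symm).resolve_left hV1
    have hex : ∃ p, 0 < p ∧ cheb μ p = 0 := ⟨n+1, by omega, ht_n⟩
    obtain ⟨hp0, hp⟩ := Nat.find_spec hex
    set p := Nat.find hex with hpdef
    have hmin : ∀ q, 0 < q → q < p → cheb μ q ≠ 0 := by
      intro q h1 h2 h3
      exact Nat.find_min hex h2 ⟨h1, h3⟩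
    have hdvd := cheb_dvd μ p hp0 hp hmin
    have hp1 : p ≠ 1 := by
      intro h
      rw [h] at hp
      simp [cheb] at hp
    intro hg
    have h1 : p ∣ Nat.gcd (i.1+1) (n+1) :=
      Nat.dvd_gcd (hdvd _ (by omega) ht_i) (hdvd _ (by omega) ht_n)
    rw [hg] at h1
    exact hp1 (Nat.dvd_one.mp h1)
  · intro hg
    set d := Nat.gcd (i.1+1) (n+1) with hddef
    have hdi : d ∣ i.1 + 1 := Nat.gcd_dvd_left _ _
    have hdn : d ∣ n + 1 := Nat.gcd_dvd_right _ _
    have hd0 : 0 < d := Nat.gcd_pos_of_pos_left _ (by omega)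
    have hd2 : 2 ≤ d := by omega
    set θ := Real.pi / d with hθdef
    have hθpos : 0 < θ := by
      apply div_pos Real.pi_pos
      positivity
    have hθlt : θ < Real.pi := by
      rw [hθdef]
      apply div_lt_self Real.pi_pos
      exact_mod_cast by omega
    have hV0 : Real.sin ((0:ℕ) * θ) = 0 := by norm_num
    have hVn : Real.sin (((n+1:ℕ)) * θ) = 0 := by
      rw [hθdef]; exact sin_div_zero d (n+1) hd0 hdn
    have hVv : ∀ k : Fin n, Real.sin ((k.1+1) * θ) = Real.sin (((k.1+1:ℕ)) * θ) := by
      intro k; congr 1; push_cast; ring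
    have hrec : ∀ j < n, Real.sin ((j:ℕ) * θ) + Real.sin (((j+2:ℕ)) * θ)
        = (2 * Real.cos θ) * Real.sin (((j+1:ℕ)) * θ) := by
      intro j hj
      push_cast
      rw [show ((j:ℝ)) * θ = ((j:ℝ)+1) * θ - θ by ring,
        show ((j:ℝ)+2) * θ = ((j:ℝ)+1) * θ + θ by ring,
        Real.sin_add, Real.sin_sub]
      ring
    have hnz : (fun k : Fin n => Real.sin ((k.1+1) * θ)) ≠ 0 := by
      intro h
      have h0 := congrFun h ⟨0, i.pos⟩
      simp only [Pi.zero_apply] at h0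
      norm_num at h0
      have hpos := Real.sin_pos_of_pos_of_lt_pi hθpos hθlt
      rw [h0] at hpos
      exact lt_irrefl 0 hpos
    refine ⟨2 * Real.cos θ, fun k => Real.sin ((k.1+1) * θ), hnz, ?_, ?_⟩
    · exact (mulVec_iff n _ _ (fun j : ℕ => Real.sin (j * θ)) hV0 hVn hVv).mpr hrec
    · show Real.sin ((i.1+1) * θ) = 0
      rw [show ((i.1:ℝ)+1) * θ = ((i.1+1:ℕ)) * θ by push_cast; ring, hθdef]
      exact sin_div_zero d (i.1+1) hd0 hdi
end

section
/- Call a singleton {i} ⊆ {1,...,n} a driver set for the path graph P_n if the pair (A, e_i) is controllable, where A is the adjacency matrix of P_n and e_i the i-th standard basis vector; equivalently (by the PBH test), no eigenvector of A has i-th entry equal to zero. Then the number of i ∈ {1,...,n} such that {i} is a driver set for P_n equals Euler's totient φ(n+1). -/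
/-!
Pad an eigenvector `v` of `pathAdj n` (eigenvalue `μ`) with zeros at the phantom vertices `0` and
`n + 1`. Every row of `A v = μ v` then becomes the recurrence `x (j + 2) = μ x (j + 1) - x j`, so
`v j = S_j(μ) v 0` with `S` the rescaled Chebyshev polynomials of the second kind. Hence `v 0 ≠ 0`,
and the right boundary forces `S_n(μ) = 0`, i.e. `μ = 2 cos (k π / (n + 1))` with `1 ≤ k ≤ n`.
As `S_j(2 cos θ) sin θ = sin ((j + 1) θ)`, the entry `v i` vanishes iff `n + 1 ∣ (i + 1) k`, which
is impossible when `i + 1` is coprime to `n + 1`. Conversely, if `d = gcd (i + 1, n + 1) > 1`, the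
eigenvector `j ↦ sin ((j + 1) π / d)` vanishes at `i`. So the driver vertices are the `i` with
`i + 1` coprime to `n + 1`.
-/

open Matrix Polynomial Polynomial.Chebyshev Real

def padded {n : ℕ} (v : Fin n → ℝ) (k : ℕ) : ℝ :=
  if h : k ≠ 0 ∧ k - 1 < n then v ⟨k - 1, h.2⟩ else 0

section padded

variable {n : ℕ} (v : Fin n → ℝ)

@[simp] lemma padded_zero : padded v 0 = 0 := by simp [padded]

@[simp] lemma padded_succ (i : Fin n) : padded v (i + 1) = v i := by simp [padded]

@[simp] lemma padded_last : padded v (n + 1) = 0 := by simp [padded]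

lemma sum_ite_succ_eq_padded (k : ℕ) :
    ∑ j : Fin n, (if j.1 + 1 = k then v j else 0) = padded v k := by
  unfold padded
  split_ifs with h
  · rw [Fintype.sum_eq_single ⟨k - 1, h.2⟩ fun j hj =>
      if_neg fun hjk => hj (Fin.ext (show j.1 = k - 1 by omega))]
    exact if_pos (show k - 1 + 1 = k by omega)
  · exact Finset.sum_eq_zero fun j _ => if_neg (by omega)

end padded

lemma pathAdj_mulVec_apply {n : ℕ} (v : Fin n → ℝ) (i : Fin n) :
    (pathAdj n *ᵥ v) i = padded v i + padded v (i.1 + 2) := by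
  rw [← sum_ite_succ_eq_padded v i, ← sum_ite_succ_eq_padded v (i.1 + 2),
    ← Finset.sum_add_distrib, mulVec, dotProduct]
  refine Finset.sum_congr rfl fun j _ => ?_
  simp only [pathAdj, of_apply]
  split_ifs <;> first | ring1 | omega

lemma pathAdj_mulVec_eq_smul_iff {n : ℕ} {v : Fin n → ℝ} {μ : ℝ} :
    pathAdj n *ᵥ v = μ • v ↔
      ∀ j < n, padded v (j + 2) = μ * padded v (j + 1) - padded v j := by
  simp only [funext_iff, Fin.forall_iff, pathAdj_mulVec_apply, Pi.smul_apply, smul_eq_mul]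
  refine forall₂_congr fun j hj => ?_
  rw [← padded_succ v ⟨j, hj⟩]
  constructor <;> intro h <;> linarith

lemma eq_eval_S_mul_of_recurrence {R : Type*} [CommRing R] {x : ℕ → R} {μ : R} {N : ℕ}
    (h0 : x 0 = 0) (hrec : ∀ j, j + 2 ≤ N → x (j + 2) = μ * x (j + 1) - x j) :
    ∀ j, j + 1 ≤ N → x (j + 1) = (S R j).eval μ * x 1 := by
  intro j
  induction j using Nat.twoStepInduction with
  | zero => simp
  | one => intro hN; simp [hrec 0 hN, h0]
  | more j ih₁ ih₂ =>
    intro hN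
    rw [hrec (j + 1) hN, ih₂ (by omega), ih₁ (by omega)]
    push_cast
    rw [S_add_two, eval_sub, eval_mul, eval_X]
    ring

lemma sin_nat_mul_pi_div_eq_zero_iff {a b : ℕ} (hb : b ≠ 0) : sin (a * π / b) = 0 ↔ b ∣ a := by
  rw [sin_eq_zero_iff]
  constructor
  · rintro ⟨m, hm⟩
    have : (a : ℤ) = m * b := by
      have : (m : ℝ) * b = a := by field_simp at hm; linarith
      exact_mod_cast this.symm
    exact Int.natCast_dvd_natCast.1 ⟨m, by rw [this, mul_comm]⟩
  · rintro ⟨c, rfl⟩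
    exact ⟨c, by push_cast; field_simp⟩

lemma exists_eq_two_mul_cos_of_eval_S_eq_zero {n : ℕ} {μ : ℝ} (h : (S ℝ n).eval μ = 0) :
    ∃ k < n, μ = 2 * cos ((k + 1) * π / (n + 1)) := by
  have hroot : (U ℝ n).IsRoot (μ / 2) := by
    rw [← S_comp_two_mul_X, IsRoot, eval_comp]
    simpa [mul_div_cancel₀]
  have hU : U ℝ n ≠ 0 := fun h0 => by simpa [h0] using degree_U_natCast ℝ n
  rw [← mem_roots hU, roots_U_real, Finset.mem_val, Finset.mem_image] at hroot
  obtain ⟨k, hk, hμ⟩ := hroot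
  exact ⟨k, Finset.mem_range.1 hk, by rw [hμ]; ring⟩

noncomputable def sineVec (n : ℕ) (θ : ℝ) : Fin n → ℝ := fun j => sin ((j + 1) * θ)

lemma padded_sineVec {n : ℕ} {θ : ℝ} (h : sin ((n + 1) * θ) = 0) {k : ℕ} (hk : k ≤ n + 1) :
    padded (sineVec n θ) k = sin (k * θ) := by
  rcases k with _ | k
  · simp
  rcases hk.lt_or_eq with hk | hk
  · simpa [sineVec] using padded_succ (sineVec n θ) ⟨k, by omega⟩
  · obtain rfl : k = n := by omega
    simpa using h.symm

lemma pathAdj_mulVec_sineVec {n : ℕ} {θ : ℝ} (h : sin ((n + 1) * θ) = 0) :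
    pathAdj n *ᵥ sineVec n θ = (2 * cos θ) • sineVec n θ := by
  refine pathAdj_mulVec_eq_smul_iff.2 fun j hj => ?_
  rw [padded_sineVec h (by omega), padded_sineVec h (by omega), padded_sineVec h (by omega)]
  have e₁ : ((j + 2 : ℕ) : ℝ) * θ = ((j + 1 : ℕ) : ℝ) * θ + θ := by push_cast; ring
  have e₂ : (j : ℝ) * θ = ((j + 1 : ℕ) : ℝ) * θ - θ := by push_cast; ring
  rw [e₁, e₂, sin_add, sin_sub]
  ring

def IsDriverVertex (n : ℕ) (i : Fin n) : Prop :=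
  ∀ (μ : ℝ) (v : Fin n → ℝ), v ≠ 0 → pathAdj n *ᵥ v = μ • v → v i ≠ 0

lemma isDriverVertex_of_coprime {n : ℕ} {i : Fin n} (hi : (i.1 + 1).Coprime (n + 1)) :
    IsDriverVertex n i := by
  intro μ v hv heig hvi
  have hS : ∀ j ≤ n, padded v (j + 1) = (S ℝ j).eval μ * padded v 1 :=
    fun j hj => eq_eval_S_mul_of_recurrence (N := n + 1) (padded_zero v)
      (fun k hk => pathAdj_mulVec_eq_smul_iff.1 heig k (by omega)) j (by omega)
  have hv₁ : padded v 1 ≠ 0 := fun h₁ =>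
    hv (funext fun j => by simpa [h₁] using hS j j.2.le)
  have hSn : (S ℝ n).eval μ = 0 := by
    simpa [hv₁] using (hS n le_rfl).symm
  have hSi : (S ℝ i).eval μ = 0 := by
    simpa [hvi, hv₁] using (hS i i.2.le).symm
  obtain ⟨k, hk, rfl⟩ := exists_eq_two_mul_cos_of_eval_S_eq_zero hSn
  have hsin : sin (((i.1 + 1) * (k + 1) : ℕ) * π / (n + 1 : ℕ)) = 0 := by
    rw [← zero_mul (sin _), ← hSi, S_two_mul_real_cos]
    push_cast
    ring_nf
  have hdvd : n + 1 ∣ k + 1 :=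
    (hi.symm.dvd_mul_left).1 ((sin_nat_mul_pi_div_eq_zero_iff (by omega)).1 hsin)
  exact absurd (Nat.le_of_dvd (by omega) hdvd) (by omega)

lemma IsDriverVertex.coprime {n : ℕ} (hn : 0 < n) {i : Fin n} (hi : IsDriverVertex n i) :
    (i.1 + 1).Coprime (n + 1) := by
  by_contra hcop
  set d := (i.1 + 1).gcd (n + 1)
  have hd : 2 ≤ d := by
    have : d ≠ 0 := (Nat.gcd_pos_of_pos_right _ (by omega)).ne'
    omega
  have hsin : ∀ a : ℕ, sin ((a : ℝ) * (π / d)) = 0 ↔ d ∣ a := fun a => by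
    rw [← mul_div_assoc]; exact sin_nat_mul_pi_div_eq_zero_iff (by omega)
  refine hi (2 * cos (π / d)) (sineVec n (π / d)) (fun h => ?_)
    (pathAdj_mulVec_sineVec (by exact_mod_cast (hsin (n + 1)).2 (Nat.gcd_dvd_right _ _))) ?_
  · have := Nat.le_of_dvd one_pos ((hsin 1).1 (by simpa [sineVec] using congrFun h ⟨0, hn⟩))
    omega
  · simpa [sineVec] using (hsin (i.1 + 1)).2 (Nat.gcd_dvd_left _ _)

lemma isDriverVertex_iff_coprime {n : ℕ} (hn : 0 < n) (i : Fin n) :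
    IsDriverVertex n i ↔ (i.1 + 1).Coprime (n + 1) :=
  ⟨IsDriverVertex.coprime hn, isDriverVertex_of_coprime⟩

lemma card_coprime_succ_eq_totient {n : ℕ} (hn : 0 < n) :
    Nat.card {i : Fin n // (i.1 + 1).Coprime (n + 1)} = Nat.totient (n + 1) := by
  rw [Nat.totient_eq_card_lt_and_coprime]
  refine Nat.card_eq_of_bijective (fun i => ⟨i.1 + 1, by omega, i.2.symm⟩) ⟨?_, ?_⟩
  · exact fun i j h => Subtype.ext (Fin.ext (by simpa using congrArg Subtype.val h))
  · rintro ⟨m, hm, hcop⟩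
    have hm₀ : m - 1 + 1 = m := Nat.sub_add_cancel (Nat.pos_of_ne_zero
      (by rintro rfl; simp only [Nat.coprime_zero_right] at hcop; omega))
    exact ⟨⟨⟨m - 1, by omega⟩, by simpa [hm₀] using hcop.symm⟩, Subtype.ext hm₀⟩

/-- `{i}` is a driver set for `P_n` iff no eigenvector of the adjacency matrix has
`i`-th entry zero (PBH test); the number of such `i` is `φ(n+1)`. -/
theorem stmt3 (n : ℕ) (hn : 0 < n) :
    Nat.card {i : Fin n //
        ∀ (μ : ℝ) (v : Fin n → ℝ), v ≠ 0 → (pathAdj n).mulVec v = μ • v → v i ≠ 0}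
      = Nat.totient (n + 1) :=
  (Nat.card_congr (Equiv.subtypeEquivRight (isDriverVertex_iff_coprime hn))).trans
    (card_coprime_succ_eq_totient hn)
end

section
/- Call a pair {i,j} ⊆ {1,...,n} (i ≠ j) a driver set for the cycle graph C_n if the pair (A, B_{i,j}) is controllable, where A is the adjacency matrix of C_n and B_{i,j} = [e_i, e_j]. Then {i,j} is a driver set for C_n if and only if gcd(2d, n) ∈ {1, 2}, where d = min(|j - i|, n - |j - i|) is the cycle distance between i and j. -/
/-!
An input matrix `B` fails to control `A = Aᵀ` exactly when some eigenvector of `A` vanishes on the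
driver vertices. An eigenvector of `C_n` with eigenvalue `μ` is a solution of
`v (m + 1) + v (m - 1) = μ v m` on `ℤ/n`; once `v i = 0` it is `v (i + k) = v (i + 1) S_{k-1}(μ)`
with `S` the rescaled Chebyshev polynomials of the second kind. Writing `μ = z + z⁻¹`, one has
`(z - z⁻¹) S_{k-1}(μ) = z^k - z^{-k}`, so a nonzero such `v` also vanishing at `j` forces
`z^n = 1`, `z^{2d} = 1` and `z² ≠ 1`, i.e. `gcd(2d, n) ≥ 3`. Conversely, for a primitive
`gcd(2d, n)`-th root of unity `z`, the "sine" vector `z^(m-i) - z^(i-m)` is such an eigenvector.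
-/

/-- The adjacency matrix of the cycle graph `C_n` (over `ℝ`); vertex `i ∈ {1,…,n}`
is represented by `⟨i-1⟩ : Fin n`, and `i,j` are adjacent iff `i - j ≡ ±1 (mod n)`. -/
def cycAdj (n : ℕ) : Matrix (Fin n) (Fin n) ℝ :=
  Matrix.of fun i j => if (i.1 + 1) % n = j.1 ∨ (j.1 + 1) % n = i.1 then 1 else 0

/-- The matrix `B = [e_i, e_j]`. -/
def pairMatrix (n : ℕ) (i j : Fin n) : Matrix (Fin n) (Fin 2) ℝ :=
  Matrix.of fun r c => if r = (if c = 0 then i else j) then 1 else 0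

open Matrix Polynomial Polynomial.Chebyshev
open Fin.NatCast Fin.CommRing

theorem Polynomial.Chebyshev.sub_mul_S_eval_add {R : Type*} [CommRing R] {x y : R}
    (hxy : x * y = 1) (k : ℕ) : (x - y) * (S R (k - 1)).eval (x + y) = x ^ k - y ^ k := by
  induction k using Nat.twoStepInduction with
  | zero => simp
  | one => simp
  | more k ih₀ ih₁ =>
    have hk : ((k + 2 : ℕ) : ℤ) - 1 = (k - 1) + 2 := by push_cast; ring
    have hk₁ : (k - 1 : ℤ) + 1 = ((k + 1 : ℕ) : ℤ) - 1 := by push_cast; ring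
    rw [hk, S_add_two, hk₁, eval_sub, eval_mul, eval_X, mul_sub, ← mul_assoc, mul_comm (x - y),
      mul_assoc, ih₁, ih₀]
    linear_combination (x ^ k - y ^ k) * hxy

theorem apply_add_eq_mul_S_eval {G R : Type*} [AddCommGroupWithOne G] [CommRing R] {v : G → R}
    {μ : R} (hv : ∀ m, v (m + 1) + v (m - 1) = μ * v m) {i : G} (hi : v i = 0) (k : ℤ) :
    v (i + k) = v (i + 1) * (S R (k - 1)).eval μ := by
  induction k using Polynomial.Chebyshev.induct with
  | zero => simp [hi]
  | one => simp
  | add_two k ih₁ ih₀ =>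
    have h := hv (i + (k + 1 : ℤ))
    rw [show i + ((k + 1 : ℤ) : G) + 1 = i + (k + 2 : ℤ) by
        push_cast; rw [← one_add_one_eq_two]; abel,
      show i + ((k + 1 : ℤ) : G) - 1 = i + (k : ℤ) by push_cast; abel] at h
    rw [show (k : ℤ) + 2 - 1 = k + 1 by ring, S_add_one, eval_sub, eval_mul, eval_X]
    rw [add_sub_cancel_right] at ih₁
    linear_combination h + μ * ih₁ - ih₀
  | neg_add_one k ih₀ ih₁ =>
    have h := hv (i + (-k : ℤ))
    rw [show i + ((-k : ℤ) : G) + 1 = i + (-k + 1 : ℤ) by push_cast; abel,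
      show i + ((-k : ℤ) : G) - 1 = i + (-k - 1 : ℤ) by push_cast; abel] at h
    rw [show (-k : ℤ) - 1 - 1 = -k - 2 by ring, S_sub_two, eval_sub, eval_mul, eval_X]
    rw [add_sub_cancel_right] at ih₁
    linear_combination h + μ * ih₀ - ih₁

theorem three_le_gcd_of_S_eval {μ : ℂ} {n d : ℕ} (hn : n ≠ 0)
    (hn₀ : (S ℂ (n - 1)).eval μ = 0) (hn₁ : (S ℂ n).eval μ = 1)
    (hd : (S ℂ (d - 1)).eval μ = 0) : 3 ≤ Nat.gcd (2 * d) n := by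
  obtain ⟨z, w, hzw, rfl⟩ : ∃ z w : ℂ, z * w = 1 ∧ z + w = μ := by
    obtain ⟨s, hs⟩ := IsAlgClosed.exists_pow_nat_eq (μ ^ 2 - 4) two_pos
    exact ⟨(μ + s) / 2, (μ - s) / 2, by linear_combination -hs / 4, by ring⟩
  by_cases hz : z = w
  · -- then `μ = ±2`, where `S_{n-1}(±2) = ±n`
    subst hz
    rcases mul_self_eq_one_iff.mp hzw with rfl | rfl <;> norm_num at hn₀ <;> exact absurd hn₀ hn
  have closed (k : ℕ) := sub_mul_S_eval_add hzw k
  have hzn : z ^ n = w ^ n := by linear_combination -(closed n) + (z - w) * hn₀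
  have hzn₁ : z ^ n = 1 := by
    have h := closed (n + 1)
    rw [Nat.cast_succ, add_sub_cancel_right, hn₁, pow_succ, pow_succ, ← hzn] at h
    exact mul_right_cancel₀ (sub_ne_zero.mpr hz)
      (by linear_combination -h : z ^ n * (z - w) = 1 * (z - w))
  have hzd : z ^ (2 * d) = 1 := by
    have hzd : z ^ d = w ^ d := by linear_combination -(closed d) + (z - w) * hd
    rw [two_mul, pow_add]
    nth_rw 2 [hzd]
    rw [← mul_pow, hzw, one_pow]
  by_contra! hg
  have hz2 : z ^ 2 = 1 := by
    have h := pow_gcd_eq_one.mpr ⟨hzd, hzn₁⟩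
    have hpos : 0 < Nat.gcd (2 * d) n := Nat.gcd_pos_of_pos_right _ (Nat.pos_of_ne_zero hn)
    interval_cases Nat.gcd (2 * d) n
    · rw [pow_one] at h; rw [h, one_pow]
    · exact h
  exact hz (mul_left_cancel₀ (left_ne_zero_of_mul_eq_one hzw) (by rw [hzw, ← sq, hz2]))

theorem Matrix.rank_eq_card_iff_forall_vecMul_eq_zero {R m n : Type*} [Field R] [Fintype m]
    [Fintype n] (M : Matrix m n R) :
    M.rank = Fintype.card m ↔ ∀ v, v ᵥ* M = 0 → v = 0 := by
  rw [rank_eq_finrank_span_row, eq_comm, ← Set.finrank,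
    ← linearIndependent_iff_card_eq_finrank_span, Fintype.linearIndependent_iff]
  simp only [vecMul_eq_sum, funext_iff]
  rfl

lemma vecMul_pairMatrix {n : ℕ} (i j : Fin n) (v : Fin n → ℂ) :
    v ᵥ* (pairMatrix n i j).map Complex.ofReal = ![v i, v j] := by
  ext c
  fin_cases c <;> simp [vecMul, dotProduct, pairMatrix, apply_ite Complex.ofReal]

lemma Fin.pow_val_add {M : Type*} [Monoid M] {n : ℕ} {z : M} (hz : z ^ n = 1) (a b : Fin n) :
    z ^ (a + b).val = z ^ a.val * z ^ b.val := by
  rw [Fin.val_add, ← pow_eq_pow_mod _ hz, pow_add]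

lemma gcd_two_mul_sub_self {n x : ℕ} (hx : x ≤ n) :
    Nat.gcd (2 * (n - x)) n = Nat.gcd (2 * x) n := by
  rw [← Int.gcd_natCast_natCast, ← Int.gcd_natCast_natCast, Nat.cast_mul, Nat.cast_sub hx,
    show (2 : ℕ) * ((n : ℤ) - x) = -(2 * x) + 2 * n by push_cast; ring,
    Int.gcd_add_mul_right_left, Int.neg_gcd]
  rfl

lemma Fin.val_sub_eq_or {n : ℕ} (i j : Fin n) :
    (j - i).val = max i.1 j.1 - min i.1 j.1 ∨ (j - i).val = n - (max i.1 j.1 - min i.1 j.1) := by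
  rcases le_or_gt i j with h | h
  · left; rw [Fin.coe_sub_iff_le.mpr h]; omega
  · right; rw [Fin.coe_sub_iff_lt.mpr h]; omega

lemma gcd_two_mul_val_sub {n : ℕ} (i j : Fin n) :
    Nat.gcd (2 * (j - i).val) n
      = Nat.gcd (2 * min (max i.1 j.1 - min i.1 j.1) (n - (max i.1 j.1 - min i.1 j.1))) n := by
  have hflip := gcd_two_mul_sub_self (n := n) (x := max i.1 j.1 - min i.1 j.1) (by omega)
  rcases Fin.val_sub_eq_or i j with h | h <;>
    rcases min_choice (max i.1 j.1 - min i.1 j.1) (n - (max i.1 j.1 - min i.1 j.1)) with h' | h' <;>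
    rw [h, h'] <;> simp only [hflip]

section Cycle

variable {n : ℕ} [NeZero n]

lemma cycAdj_apply (a b : Fin n) :
    cycAdj n a b = if a = b - 1 ∨ a = b + 1 then 1 else 0 := by
  simp only [cycAdj, of_apply, eq_sub_iff_add_eq, Fin.ext_iff, Fin.val_add, Fin.val_one',
    Nat.add_mod_mod, eq_comm (a := a.val)]

lemma vecMul_cycAdj (hn : 3 ≤ n) (v : Fin n → ℂ) :
    v ᵥ* (cycAdj n).map Complex.ofReal = fun m => v (m + 1) + v (m - 1) := by
  have hne (m : Fin n) : m - 1 ≠ m + 1 := by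
    rw [Ne, sub_eq_iff_eq_add, add_assoc, left_eq_add, one_add_one_eq_two, Fin.ext_iff]
    simp [Nat.mod_eq_of_lt (by omega : 2 < n)]
  ext m
  simp only [vecMul, dotProduct, map_apply, cycAdj_apply]
  rw [Fintype.sum_eq_add (m + 1) (m - 1) (hne m).symm (fun l hl => by simp [hl.1, hl.2])]
  simp [hne m, (hne m).symm]

theorem rank_fromCols_cycAdj_pairMatrix_eq_iff (hn : 3 ≤ n) (i j : Fin n) (μ : ℂ) :
    (fromCols ((cycAdj n).map Complex.ofReal - μ • 1)
        ((pairMatrix n i j).map Complex.ofReal)).rank = n ↔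
      ∀ v : Fin n → ℂ, (∀ m, v (m + 1) + v (m - 1) = μ * v m) ∧ v i = 0 ∧ v j = 0 → v = 0 := by
  have h := Matrix.rank_eq_card_iff_forall_vecMul_eq_zero
    (fromCols ((cycAdj n).map Complex.ofReal - μ • 1) ((pairMatrix n i j).map Complex.ofReal))
  rw [Fintype.card_fin] at h
  rw [h]
  refine forall_congr' fun v => imp_congr_left ?_
  rw [vecMul_fromCols, ← Sum.elim_zero_zero, Sum.elim_eq_iff, vecMul_sub, vecMul_cycAdj hn,
    vecMul_smul, vecMul_one, vecMul_pairMatrix, sub_eq_zero, funext_iff]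
  simp

theorem exists_vanishing_eigenvector_of_three_le_gcd (i j : Fin n)
    (h : 3 ≤ Nat.gcd (2 * (j - i).val) n) :
    ∃ μ : ℂ, ∃ v : Fin n → ℂ, v ≠ 0 ∧
      ((∀ m, v (m + 1) + v (m - 1) = μ * v m) ∧ v i = 0 ∧ v j = 0) := by
  set g := Nat.gcd (2 * (j - i).val) n
  obtain ⟨z, hz⟩ : ∃ z : ℂ, IsPrimitiveRoot z g := ⟨_, Complex.isPrimitiveRoot_exp g (by omega)⟩
  have hzn : z ^ n = 1 := (hz.pow_eq_one_iff_dvd n).mpr (Nat.gcd_dvd_right _ _)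
  have hzd : z ^ (2 * (j - i).val) = 1 := (hz.pow_eq_one_iff_dvd _).mpr (Nat.gcd_dvd_left _ _)
  have hz2 : z ^ 2 ≠ 1 := fun h2 => by
    have := Nat.le_of_dvd two_pos ((hz.pow_eq_one_iff_dvd 2).mp h2); omega
  set χ : Fin n → ℂ := fun a => z ^ a.val
  have hχ (a b : Fin n) : χ (a + b) = χ a * χ b := Fin.pow_val_add hzn a b
  have hχ₀ : χ 0 = 1 := by simp [χ]
  have hχ₁ : χ 1 = z := by simp only [χ, Fin.val_one', ← pow_eq_pow_mod _ hzn, pow_one]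
  have hχneg (a : Fin n) : χ a * χ (-a) = 1 := by rw [← hχ, add_neg_cancel, hχ₀]
  refine ⟨χ 1 + χ (-1), fun m => χ (m - i) - χ (i - m), fun h => ?_, fun m => ?_, by simp, ?_⟩
  · have h₁ : χ 1 = χ (-1) := by simpa [sub_eq_zero] using congrFun h (i + 1)
    exact hz2 (by rw [← hχ₁, sq]; nth_rw 2 [h₁]; exact hχneg 1)
  · simp only [show m + 1 - i = m - i + 1 by ring, show i - (m + 1) = i - m + -1 by ring,
      show m - 1 - i = m - i + -1 by ring, show i - (m - 1) = i - m + 1 by ring, hχ]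
    ring
  · have hsq : χ (j - i) * χ (j - i) = 1 := by rw [← pow_add, ← two_mul]; exact hzd
    have hinv := hχneg (j - i)
    rw [neg_sub] at hinv
    show χ (j - i) - χ (i - j) = 0
    linear_combination χ (i - j) * hsq - χ (j - i) * hinv

theorem three_le_gcd_of_vanishing_eigenvector {μ : ℂ} {v : Fin n → ℂ}
    (hv : ∀ m, v (m + 1) + v (m - 1) = μ * v m) {i j : Fin n} (hi : v i = 0) (hj : v j = 0)
    (hv₀ : v ≠ 0) : 3 ≤ Nat.gcd (2 * (j - i).val) n := by
  have hS := apply_add_eq_mul_S_eval hv hi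
  have hS_val (a : Fin n) : v a = v (i + 1) * (S ℂ ((a - i).val - 1)).eval μ := by
    simpa using hS (a - i).val
  have h₁ : v (i + 1) ≠ 0 := fun h => hv₀ (funext fun a => by simp [hS_val a, h])
  refine three_le_gcd_of_S_eval (μ := μ) (NeZero.ne n) ?_ ?_ ?_
  · simpa [hi, h₁] using hS n
  · simpa [h₁] using hS (n + 1)
  · simpa [hj, h₁] using hS_val j

end Cycle

theorem stmt11_general (n : ℕ) (hn : 3 ≤ n) (i j : Fin n) :
    (∀ μ : ℂ,
      (Matrix.fromCols ((cycAdj n).map Complex.ofReal - μ • 1)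
        ((pairMatrix n i j).map Complex.ofReal)).rank = n)
    ↔ (Nat.gcd (2 * min (max i.1 j.1 - min i.1 j.1) (n - (max i.1 j.1 - min i.1 j.1))) n = 1
       ∨ Nat.gcd (2 * min (max i.1 j.1 - min i.1 j.1) (n - (max i.1 j.1 - min i.1 j.1))) n = 2) := by
  have : NeZero n := ⟨by omega⟩
  have hg : 0 < Nat.gcd (2 * (j - i).val) n := Nat.gcd_pos_of_pos_right _ (by omega)
  simp only [rank_fromCols_cycAdj_pairMatrix_eq_iff hn, ← gcd_two_mul_val_sub i j]
  constructor
  · intro h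
    by_contra hg'
    obtain ⟨μ, v, hv₀, hv⟩ := exists_vanishing_eigenvector_of_three_le_gcd i j (by omega)
    exact hv₀ (h μ v hv)
  · rintro hg' μ v ⟨hv, hi, hj⟩
    by_contra hv₀
    have := three_le_gcd_of_vanishing_eigenvector hv hi hj hv₀
    omega

/-- `{i,j}` is a driver set for `C_n` iff `gcd(2d, n) ∈ {1,2}`, where `d` is the
cycle distance between `i` and `j`. -/
theorem stmt11 (n : ℕ) (hn : 3 ≤ n) (i j : Fin n) (hij : i ≠ j) :
    (∀ μ : ℂ,
      (Matrix.fromCols ((cycAdj n).map Complex.ofReal - μ • 1)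
        ((pairMatrix n i j).map Complex.ofReal)).rank = n)
    ↔ (Nat.gcd (2 * min (max i.1 j.1 - min i.1 j.1) (n - (max i.1 j.1 - min i.1 j.1))) n = 1
       ∨ Nat.gcd (2 * min (max i.1 j.1 - min i.1 j.1) (n - (max i.1 j.1 - min i.1 j.1))) n = 2) :=
  stmt11_general n hn i j
end

section
/- Let n ≥ 3, let X ∈ Sym₀(P_n) (real symmetric, zero diagonal, X[i][j] ≠ 0 iff |i-j| = 1), let i ∈ {2,...,n-1}, and let Y be the top-left (i-1)×(i-1) principal submatrix of X and Z the bottom-right (n-i)×(n-i) principal submatrix. For λ ∈ ℝ, the matrix obtained from X - λI by deleting row i has rank < n - 1 if and only if λ is a common eigenvalue of Y and Z. -/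
/-!
Write `B = X - λ I` and `p = i - 1` for the deleted row (rows are indexed from `0`). As `B` is
tridiagonal with nonzero off-diagonal entries, the equations `(B V)ⱼ = 0` for `j < p` determine
`V₀, …, Vₚ` from `V₀`, and those for `j > p` determine `Vₚ, …, Vₙ₋₁` from `Vₙ₋₁`. So the kernel `K`
of the row-deleted matrix embeds into `𝕜²` via `V ↦ (V₀, Vₙ₋₁)`, and the rank is `< n - 1` iff
`dim K = 2`, i.e. iff `K` contains some `V` with `V₀ ≠ 0 = Vₙ₋₁` and some `W` with `Wₙ₋₁ ≠ 0 = W₀`.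
Such a `V` vanishes from `p` on, so its top part is a `λ`-eigenvector of `Y`; conversely a
`λ`-eigenvector of `Y` padded with zeros lies in `K` and has nonzero first entry. Symmetrically,
the `W`s correspond to the `λ`-eigenvectors of `Z`.
-/

open Matrix

variable {𝕜 : Type*} [Field 𝕜] {n : ℕ}

def Fin.natAddSub (q : ℕ) (a : Fin (n - q)) : Fin n :=
  ⟨q + a.1, by omega⟩

theorem Fin.natAddSub_injective (q : ℕ) : Function.Injective (Fin.natAddSub (n := n) q) :=
  fun a b h => Fin.ext (by simpa [Fin.natAddSub] using h)

theorem Fin.range_natAddSub (q : ℕ) : Set.range (Fin.natAddSub (n := n) q) = {j | q ≤ j.1} := by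
  ext j
  refine ⟨?_, fun (hj : q ≤ j.1) =>
    ⟨⟨j.1 - q, by omega⟩, Fin.ext (by simp only [Fin.natAddSub]; omega)⟩⟩
  rintro ⟨a, rfl⟩
  simp [Fin.natAddSub]

theorem Submodule.exists_mem_ne_zero_apply_eq_zero {ι : Type*} [Fintype ι]
    {K : Submodule 𝕜 (ι → 𝕜)} (hK : 2 ≤ Module.finrank 𝕜 K) (b : ι) :
    ∃ V ∈ K, V ≠ 0 ∧ V b = 0 := by
  have hker := LinearMap.ker_ne_bot_of_finrank_lt (f := (LinearMap.proj b).comp K.subtype)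
    (by rw [Module.finrank_self]; omega)
  obtain ⟨⟨V, hVK⟩, hV, hV0⟩ := Submodule.exists_mem_ne_zero_of_ne_bot hker
  exact ⟨V, hVK, fun h => hV0 (Subtype.ext h), hV⟩

theorem Submodule.two_le_finrank_iff {ι : Type*} [Fintype ι] {K : Submodule 𝕜 (ι → 𝕜)} {a b : ι}
    (hK : ∀ V ∈ K, V a = 0 → V b = 0 → V = 0) :
    2 ≤ Module.finrank 𝕜 K ↔
      (∃ V ∈ K, V a ≠ 0 ∧ V b = 0) ∧ ∃ W ∈ K, W b ≠ 0 ∧ W a = 0 := by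
  constructor
  · intro h
    obtain ⟨V, hVK, hV, hVb⟩ := exists_mem_ne_zero_apply_eq_zero h b
    obtain ⟨W, hWK, hW, hWa⟩ := exists_mem_ne_zero_apply_eq_zero h a
    exact ⟨⟨V, hVK, fun hVa => hV (hK V hVK hVa hVb), hVb⟩,
      ⟨W, hWK, fun hWb => hW (hK W hWK hWa hWb), hWa⟩⟩
  · rintro ⟨⟨V, hVK, hVa, hVb⟩, ⟨W, hWK, hWb, hWa⟩⟩
    have hli : LinearIndependent 𝕜 ![(⟨V, hVK⟩ : K), ⟨W, hWK⟩] := by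
      rw [LinearIndependent.pair_iff]
      intro s t hst
      have ha := congrFun (congrArg Subtype.val hst) a
      have hb := congrFun (congrArg Subtype.val hst) b
      simp only [Submodule.coe_add, Submodule.coe_smul, Submodule.coe_zero, Pi.add_apply,
        Pi.smul_apply, smul_eq_mul, Pi.zero_apply, hVb, hWa, mul_zero, add_zero, zero_add] at ha hb
      exact ⟨(mul_eq_zero.mp ha).resolve_right hVa, (mul_eq_zero.mp hb).resolve_right hWb⟩
    simpa using hli.fintype_card_le_finrank

theorem exists_mem_apply_ne_zero_iff_of_support {ι κ M : Type*} [Zero M] {e : κ → ι}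
    (he : Function.Injective e) {K : Set (ι → M)} {Q : (κ → M) → Prop} {a b : ι}
    (ha : a ∈ Set.range e) (hb : b ∉ Set.range e) (hK : ∀ V ∈ K, V a = 0 → V b = 0 → V = 0)
    (hsupp : ∀ V ∈ K, V b = 0 → ∀ c ∉ Set.range e, V c = 0)
    (hQ : ∀ V : ι → M, (∀ c ∉ Set.range e, V c = 0) → (V ∈ K ↔ Q (V ∘ e))) :
    (∃ V ∈ K, V a ≠ 0 ∧ V b = 0) ↔ ∃ v, v ≠ 0 ∧ Q v := by
  obtain ⟨a', rfl⟩ := ha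
  constructor
  · rintro ⟨V, hVK, hVa, hVb⟩
    exact ⟨V ∘ e, fun h => hVa (congrFun h a'), (hQ V (hsupp V hVK hVb)).mp hVK⟩
  · rintro ⟨v, hv, hQv⟩
    set V := Function.extend e v (0 : ι → M)
    have hVe : V ∘ e = v := funext (he.extend_apply v _)
    have hVsupp : ∀ c ∉ Set.range e, V c = 0 := fun c hc => Function.extend_apply' v _ c hc
    have hVK : V ∈ K := (hQ V hVsupp).mpr (hVe ▸ hQv)
    have hVb : V b = 0 := hVsupp b hb
    refine ⟨V, hVK, fun hVa => hv ?_, hVb⟩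
    rw [← hVe, hK V hVK hVa hVb]
    rfl

namespace Matrix

def deleteRow {α ι : Type*} (B : Matrix (Fin n) ι α) (p : ℕ) : Matrix (Fin (n - 1)) ι α :=
  B.submatrix (fun r => ⟨if r.1 < p then r.1 else r.1 + 1, by split <;> omega⟩) id

theorem mem_ker_mulVecLin_deleteRow_iff {B : Matrix (Fin n) (Fin n) 𝕜} {p : ℕ} (hp : p < n)
    {V : Fin n → 𝕜} :
    V ∈ LinearMap.ker (B.deleteRow p).mulVecLin ↔ ∀ j : Fin n, j.1 ≠ p → (B *ᵥ V) j = 0 := by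
  simp only [LinearMap.mem_ker, mulVecLin_apply, funext_iff, Pi.zero_apply]
  constructor
  · intro h j hj
    obtain ⟨r, hr⟩ : ∃ r : Fin (n - 1), (if r.1 < p then r.1 else r.1 + 1) = j.1 := by
      rcases Nat.lt_or_ge j.1 p with hjp | hjp
      · exact ⟨⟨j.1, by omega⟩, if_pos hjp⟩
      · exact ⟨⟨j.1 - 1, by omega⟩, by simp only; split <;> omega⟩
    have hrow : (B.deleteRow p *ᵥ V) r = (B *ᵥ V) j := congrArg (B *ᵥ V) (Fin.ext hr)
    rw [← hrow]
    exact h r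
  · intro h r
    exact h _ (by dsimp only; split <;> omega)

theorem rank_lt_sub_one_iff {ι : Type*} [Fintype ι] (M : Matrix ι (Fin n) 𝕜) :
    M.rank < n - 1 ↔ 2 ≤ Module.finrank 𝕜 (LinearMap.ker M.mulVecLin) := by
  have := LinearMap.finrank_range_add_finrank_ker M.mulVecLin
  rw [Module.finrank_fin_fun] at this
  rw [rank]
  omega

theorem mulVec_apply_eq_sum_of_support {ι κ : Type*} [Fintype ι] [Fintype κ]
    (B : Matrix ι ι 𝕜) {e : κ → ι} (he : Function.Injective e) {V : ι → 𝕜}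
    (hV : ∀ c ∉ Set.range e, V c = 0) (j : ι) :
    (B *ᵥ V) j = ∑ a, B j (e a) * V (e a) :=
  (Fintype.sum_of_injective e he _ _ (fun c hc => by rw [hV c hc, mul_zero]) fun _ => rfl).symm

theorem forall_mulVec_eq_zero_iff_of_support {m : ℕ} {B : Matrix (Fin n) (Fin n) 𝕜}
    {e : Fin m → Fin n} (he : Function.Injective e) {p : ℕ} (hep : ∀ a, (e a).1 ≠ p)
    (hfar : ∀ j ∉ Set.range e, j.1 ≠ p → ∀ a, B j (e a) = 0) {V : Fin n → 𝕜}
    (hV : ∀ c ∉ Set.range e, V c = 0) :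
    (∀ j : Fin n, j.1 ≠ p → (B *ᵥ V) j = 0) ↔ B.submatrix e e *ᵥ (V ∘ e) = 0 := by
  have hrow := mulVec_apply_eq_sum_of_support B he hV
  constructor
  · intro h
    funext a
    exact (hrow (e a)).symm.trans (h (e a) (hep a))
  · intro h j hj
    by_cases hje : j ∈ Set.range e
    · obtain ⟨a, rfl⟩ := hje
      exact (hrow (e a)).trans (congrFun h a)
    · rw [hrow]
      exact Finset.sum_eq_zero fun a _ => by rw [hfar j hje hj a, zero_mul]

theorem submatrix_sub_smul_one_mulVec_eq_zero_iff {m : ℕ} {X : Matrix (Fin n) (Fin n) 𝕜}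
    {e : Fin m → Fin n} (he : Function.Injective e) (lam : 𝕜) (v : Fin m → 𝕜) :
    (X - lam • 1).submatrix e e *ᵥ v = 0 ↔ X.submatrix e e *ᵥ v = lam • v := by
  rw [show (X - lam • 1).submatrix e e = X.submatrix e e - lam • (1 : Matrix _ _ 𝕜).submatrix e e
    from rfl, submatrix_one e he, sub_mulVec, smul_mulVec, one_mulVec, sub_eq_zero]

structure IsIrreducibleTridiagonal (B : Matrix (Fin n) (Fin n) 𝕜) : Prop where
  apply_eq_zero : ∀ j c : Fin n, j.1 + 1 < c.1 ∨ c.1 + 1 < j.1 → B j c = 0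
  apply_ne_zero : ∀ j c : Fin n, j.1 + 1 = c.1 ∨ c.1 + 1 = j.1 → B j c ≠ 0

namespace IsIrreducibleTridiagonal

variable {B : Matrix (Fin n) (Fin n) 𝕜}

theorem sub_smul_one (hB : B.IsIrreducibleTridiagonal) (lam : 𝕜) :
    (B - lam • 1).IsIrreducibleTridiagonal where
  apply_eq_zero j c h := by
    rw [sub_apply, hB.apply_eq_zero j c h, smul_apply,
      one_apply_ne (fun hjc => by subst hjc; omega), smul_zero, sub_zero]
  apply_ne_zero j c h := by
    rw [sub_apply, smul_apply, one_apply_ne (fun hjc => by subst hjc; omega), smul_zero, sub_zero]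
    exact hB.apply_ne_zero j c h

theorem submatrix_rev (hB : B.IsIrreducibleTridiagonal) :
    (B.submatrix Fin.rev Fin.rev).IsIrreducibleTridiagonal where
  apply_eq_zero j c h := hB.apply_eq_zero _ _ (by simp only [Fin.val_rev]; omega)
  apply_ne_zero j c h := hB.apply_ne_zero _ _ (by simp only [Fin.val_rev]; omega)

/-- Row `k` of `B *ᵥ V = 0` determines `V (k + 1)` from `V 0, …, V k`. -/
theorem apply_eq_zero_of_val_le (hB : B.IsIrreducibleTridiagonal) {V : Fin n → 𝕜} {k : ℕ}
    (hrows : ∀ j : Fin n, j.1 < k → (B *ᵥ V) j = 0) (hn : 0 < n) (hfirst : V ⟨0, hn⟩ = 0) :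
    ∀ j : Fin n, j.1 ≤ k → V j = 0 := by
  induction k with
  | zero =>
    intro j hj
    rwa [show j = ⟨0, hn⟩ from Fin.ext (Nat.le_zero.mp hj)]
  | succ k ih =>
    have ih := ih fun j hj => hrows j (by omega)
    intro j hj
    rcases Nat.lt_or_ge j.1 (k + 1) with hjk | hjk
    · exact ih j (by omega)
    have hrow := hrows ⟨k, by omega⟩ (by simp)
    rw [mulVec, dotProduct, Finset.sum_eq_single j] at hrow
    · exact (mul_eq_zero.mp hrow).resolve_left (hB.apply_ne_zero _ _ (by simp only; omega))
    · intro c _ hcj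
      rcases Nat.lt_or_ge c.1 (k + 1) with hck | hck
      · rw [ih c (by omega), mul_zero]
      · rw [hB.apply_eq_zero _ _ (by simp only; omega), zero_mul]
    · simp

theorem apply_eq_zero_of_le_val (hB : B.IsIrreducibleTridiagonal) {V : Fin n → 𝕜} {k : ℕ}
    (hrows : ∀ j : Fin n, k < j.1 → (B *ᵥ V) j = 0) (hn : 0 < n)
    (hlast : V ⟨n - 1, by omega⟩ = 0) :
    ∀ j : Fin n, k ≤ j.1 → V j = 0 := by
  have hrev : ∀ j : Fin n, j.1 ≤ n - 1 - k → V (Fin.rev j) = 0 := by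
    refine hB.submatrix_rev.apply_eq_zero_of_val_le (V := V ∘ Fin.rev) (fun j hj => ?_) hn
      (by rwa [Function.comp_apply, show Fin.rev ⟨0, hn⟩ = ⟨n - 1, _⟩ from Fin.ext (by simp)])
    rw [← hrows j.rev (by simp only [Fin.val_rev]; omega)]
    exact Fintype.sum_equiv Fin.revPerm _ _ fun _ => rfl
  intro j hj
  simpa using hrev (Fin.rev j) (by simp only [Fin.val_rev]; omega)

variable {p q : ℕ}

theorem eq_zero_of_mem_ker_deleteRow (hB : B.IsIrreducibleTridiagonal) (hpn : p < n)
    {V : Fin n → 𝕜} (hV : V ∈ LinearMap.ker (B.deleteRow p).mulVecLin)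
    (hfirst : V ⟨0, by omega⟩ = 0) (hlast : V ⟨n - 1, by omega⟩ = 0) : V = 0 := by
  rw [mem_ker_mulVecLin_deleteRow_iff hpn] at hV
  have hhead := hB.apply_eq_zero_of_val_le (k := p) (fun j hj => hV j (by omega)) _ hfirst
  have htail := hB.apply_eq_zero_of_le_val (k := p) (fun j hj => hV j (by omega)) (by omega) hlast
  funext j
  rcases Nat.le_total j.1 p with hj | hj
  · exact hhead j hj
  · exact htail j hj

theorem exists_mem_ker_deleteRow_iff_head (hB : B.IsIrreducibleTridiagonal) (hp : 0 < p)
    (hpn : p < n) :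
    (∃ V ∈ LinearMap.ker (B.deleteRow p).mulVecLin,
        V ⟨0, by omega⟩ ≠ 0 ∧ V ⟨n - 1, by omega⟩ = 0) ↔
      ∃ v, v ≠ 0 ∧ B.submatrix (Fin.castLE hpn.le) (Fin.castLE hpn.le) *ᵥ v = 0 := by
  have hrange := Fin.range_castLE hpn.le
  have hker (V : Fin n → 𝕜) := mem_ker_mulVecLin_deleteRow_iff (B := B) (V := V) hpn
  refine exists_mem_apply_ne_zero_iff_of_support (Fin.castLE_injective hpn.le)
    (K := (LinearMap.ker (B.deleteRow p).mulVecLin : Set (Fin n → 𝕜)))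
    (by simp [hrange, hp]) (by simp only [hrange, Set.mem_ofPred_eq, not_lt]; omega)
    (fun V hV => hB.eq_zero_of_mem_ker_deleteRow hpn hV) (fun V hV hlast c hc => ?_)
    (fun V hV => ?_)
  · rw [hrange] at hc
    exact hB.apply_eq_zero_of_le_val (k := p) (fun j hj => (hker V).mp hV j (by omega))
      (by omega) hlast c (by simp only [Set.mem_ofPred_eq, not_lt] at hc; omega)
  · refine (hker V).trans
      (forall_mulVec_eq_zero_iff_of_support (Fin.castLE_injective hpn.le) (fun a => ?_) ?_ hV)
    · simp only [Fin.val_castLE, ne_eq]; omega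
    · intro j hj hjp a
      rw [hrange] at hj
      exact hB.apply_eq_zero _ _
        (by simp only [Set.mem_ofPred_eq, not_lt, Fin.val_castLE] at hj ⊢; omega)

theorem exists_mem_ker_deleteRow_iff_tail (hB : B.IsIrreducibleTridiagonal) (hq : 0 < q)
    (hqn : q < n) :
    (∃ V ∈ LinearMap.ker (B.deleteRow (q - 1)).mulVecLin,
        V ⟨n - 1, by omega⟩ ≠ 0 ∧ V ⟨0, by omega⟩ = 0) ↔
      ∃ w, w ≠ 0 ∧ B.submatrix (Fin.natAddSub q) (Fin.natAddSub q) *ᵥ w = 0 := by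
  have hrange := Fin.range_natAddSub (n := n) q
  have hker (V : Fin n → 𝕜) := mem_ker_mulVecLin_deleteRow_iff (B := B) (V := V)
    (show q - 1 < n by omega)
  refine exists_mem_apply_ne_zero_iff_of_support (Fin.natAddSub_injective q)
    (K := (LinearMap.ker (B.deleteRow (q - 1)).mulVecLin : Set (Fin n → 𝕜)))
    (by simp only [hrange, Set.mem_ofPred_eq]; omega)
    (by simp only [hrange, Set.mem_ofPred_eq]; omega)
    (fun V hV hlast hfirst => hB.eq_zero_of_mem_ker_deleteRow (by omega) hV hfirst hlast)
    (fun V hV hfirst c hc => ?_) (fun V hV => ?_)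
  · rw [hrange] at hc
    exact hB.apply_eq_zero_of_val_le (k := q - 1) (fun j hj => (hker V).mp hV j (by omega))
      (by omega) hfirst c (by simp only [Set.mem_ofPred_eq, not_le] at hc; omega)
  · refine (hker V).trans
      (forall_mulVec_eq_zero_iff_of_support (Fin.natAddSub_injective q) (fun a => ?_) ?_ hV)
    · simp only [Fin.natAddSub, ne_eq]; omega
    · intro j hj hjq a
      rw [hrange] at hj
      exact hB.apply_eq_zero _ _
        (by simp only [Set.mem_ofPred_eq, not_le, Fin.natAddSub] at hj ⊢; omega)

end IsIrreducibleTridiagonal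

end Matrix

/-- Deletion criterion for the path graph: for `X ∈ Sym₀(P_n)` and `2 ≤ i ≤ n-1`,
the matrix obtained from `X - λI` by deleting row `i` has rank `< n-1` iff `λ` is a
common eigenvalue of the top-left `(i-1)×(i-1)` block `Y` and the bottom-right
`(n-i)×(n-i)` block `Z`. Vertices `1,…,n` are represented by `Fin n`. -/
theorem stmt13 (n : ℕ) (X : Matrix (Fin n) (Fin n) ℝ)
    (hedge : ∀ a b : Fin n, (a.1 + 1 = b.1 ∨ b.1 + 1 = a.1) → X a b ≠ 0)
    (hnonedge : ∀ a b : Fin n, ¬(a.1 + 1 = b.1 ∨ b.1 + 1 = a.1) → X a b = 0)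
    (i : ℕ) (hi1 : 2 ≤ i) (hi2 : i ≤ n - 1) (lam : ℝ) :
    (Matrix.of fun (r : Fin (n - 1)) (c : Fin n) =>
        (X - lam • 1) ⟨if r.1 < i - 1 then r.1 else r.1 + 1, by
          have := r.2; split <;> omega⟩ c).rank < n - 1
    ↔ ((∃ v : Fin (i - 1) → ℝ, v ≠ 0 ∧
          (Matrix.of fun a b : Fin (i - 1) =>
            X ⟨a.1, by have := a.2; omega⟩ ⟨b.1, by have := b.2; omega⟩).mulVec v
            = lam • v) ∧
       (∃ w : Fin (n - i) → ℝ, w ≠ 0 ∧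
          (Matrix.of fun a b : Fin (n - i) =>
            X ⟨i + a.1, by have := a.2; omega⟩ ⟨i + b.1, by have := b.2; omega⟩).mulVec w
            = lam • w)) := by
  have hX : X.IsIrreducibleTridiagonal := ⟨fun j c h => hnonedge j c (by omega), hedge⟩
  have hB := hX.sub_smul_one lam
  have hp : i - 1 < n := by omega
  change (deleteRow (X - lam • 1) (i - 1)).rank < n - 1 ↔ _
  rw [rank_lt_sub_one_iff, Submodule.two_le_finrank_iff
    (fun V hV => hB.eq_zero_of_mem_ker_deleteRow hp hV)]
  refine and_congr ?_ ?_
  · rw [hB.exists_mem_ker_deleteRow_iff_head (by omega) hp]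
    simp only [submatrix_sub_smul_one_mulVec_eq_zero_iff (Fin.castLE_injective hp.le)]
    rfl
  · rw [hB.exists_mem_ker_deleteRow_iff_tail (by omega) (by omega)]
    simp only [submatrix_sub_smul_one_mulVec_eq_zero_iff (Fin.natAddSub_injective i)]
    rfl
end

section
/- Let n ≥ 4 be even. For every X ∈ Sym₀(P_n) (real symmetric n×n, zero diagonal, off-diagonal entry (i,j) nonzero iff |i-j|=1) and every λ ∈ ℂ, the matrix obtained from X - λI by deleting row 2 has rank n - 1; equivalently, (X, e_2) is controllable for all X ∈ Sym₀(P_n). -/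
/-!
Put `A = X - μ • 1`. A left null vector `c` of `[A | e₂]`, or of `A` with row 2 deleted (padded
with `c₂ = 0`), is a null vector of the tridiagonal matrix `Aᵀ` with `c₂ = 0`, and its rows read
`a c_{p-1} - μ c_p + b c_{p+1} = 0` with `a, b ≠ 0`. If `μ ≠ 0`, the first row gives `c₁ = 0`
and the recurrence then kills all entries upwards. If `μ = 0` it only links entries of equal
parity: `c₂ = 0` propagates up through the even positions, and since `n` is even the last row
gives `c_{n-1} = 0`, which propagates down through the odd ones. (Positions are 1-based here and
0-based in the code, where `c₂` is `w 1`.)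
-/

open Matrix Finset SimpleGraph Function

section Recurrence

variable {R : Type*} [Semiring R] [NoZeroDivisors R] {n : ℕ} {l u W : ℕ → R} {d : R}

theorem eq_zero_of_recurrence_of_ne_zero (hd : d ≠ 0) (hu : ∀ p, p + 1 < n → u p ≠ 0)
    (hW : ∀ k, n ≤ k → W k = 0) (hrow₀ : 0 < n → d * W 0 + u 0 * W 1 = 0)
    (hrow : ∀ p, p + 1 < n → l p * W p + d * W (p + 1) + u (p + 1) * W (p + 2) = 0)
    (h₁ : W 1 = 0) (k : ℕ) : W k = 0 := by
  have h₀ : W 0 = 0 := by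
    rcases Nat.eq_zero_or_pos n with hn | hn
    · exact hW 0 hn.le
    · simpa [h₁, hd] using hrow₀ hn
  suffices ∀ k, W k = 0 ∧ W (k + 1) = 0 from (this k).1
  intro k
  induction k with
  | zero => exact ⟨h₀, h₁⟩
  | succ k ih =>
    refine ⟨ih.2, ?_⟩
    by_cases hk : k + 2 < n
    · simpa [ih.1, ih.2, hu (k + 1) hk] using hrow k (by omega)
    · exact hW _ (by omega)

theorem eq_zero_of_recurrence_of_eq_zero (hn : Even n) (hl : ∀ p, p + 1 < n → l p ≠ 0)
    (hu : ∀ p, p + 1 < n → u p ≠ 0) (hW : ∀ k, n ≤ k → W k = 0)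
    (hrow : ∀ p, p + 1 < n → l p * W p + u (p + 1) * W (p + 2) = 0)
    (h₁ : W 1 = 0) (k : ℕ) : W k = 0 := by
  have hodd : ∀ k, W (2 * k + 1) = 0 := by
    intro k
    induction k with
    | zero => exact h₁
    | succ k ih =>
      by_cases hk : 2 * k + 3 < n
      · rw [show 2 * (k + 1) + 1 = 2 * k + 1 + 2 by ring]
        simpa [ih, hu (2 * k + 2) hk] using hrow (2 * k + 1) (by omega)
      · exact hW _ (by omega)
  have heven : ∀ j k, k + 2 * j = n → W k = 0 := by
    intro j
    induction j with
    | zero => exact fun k hk => hW k hk.ge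
    | succ j ih =>
      intro k hk
      simpa [ih (k + 2) (by omega), hl k (by omega)] using hrow k (by omega)
  obtain ⟨a, rfl | rfl⟩ := Nat.even_or_odd' k
  · by_cases hk : 2 * a < n
    · obtain ⟨r, rfl⟩ := hn
      exact heven (r - a) _ (by omega)
    · exact hW _ (by omega)
  · exact hodd a

theorem eq_zero_of_recurrence (hn : Even n) (hl : ∀ p, p + 1 < n → l p ≠ 0)
    (hu : ∀ p, p + 1 < n → u p ≠ 0) (hW : ∀ k, n ≤ k → W k = 0)
    (hrow₀ : 0 < n → d * W 0 + u 0 * W 1 = 0)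
    (hrow : ∀ p, p + 1 < n → l p * W p + d * W (p + 1) + u (p + 1) * W (p + 2) = 0)
    (h₁ : W 1 = 0) (k : ℕ) : W k = 0 := by
  rcases eq_or_ne d 0 with rfl | hd
  · exact eq_zero_of_recurrence_of_eq_zero hn hl hu hW (fun p hp => by simpa using hrow p hp) h₁ k
  · exact eq_zero_of_recurrence_of_ne_zero hd hu hW hrow₀ hrow h₁ k

end Recurrence

section ZeroExtend

variable {R : Type*} [Zero R] {n : ℕ}

def zeroExtend (v : Fin n → R) (k : ℕ) : R := if h : k < n then v ⟨k, h⟩ else 0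

def zeroExtend₂ (A : Matrix (Fin n) (Fin n) R) (p q : ℕ) : R :=
  if h : p < n ∧ q < n then A ⟨p, h.1⟩ ⟨q, h.2⟩ else 0

@[simp]
lemma zeroExtend_val (v : Fin n → R) (i : Fin n) : zeroExtend v i = v i := by
  simp [zeroExtend]

lemma zeroExtend_of_le (v : Fin n → R) {k : ℕ} (hk : n ≤ k) : zeroExtend v k = 0 :=
  dif_neg hk.not_gt

lemma zeroExtend₂_of_lt (A : Matrix (Fin n) (Fin n) R) {p q : ℕ} (hp : p < n) (hq : q < n) :
    zeroExtend₂ A p q = A ⟨p, hp⟩ ⟨q, hq⟩ :=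
  dif_pos ⟨hp, hq⟩

end ZeroExtend

lemma sum_range_eq_sum_of_support_subset {M : Type*} [AddCommMonoid M] {n : ℕ} {F : ℕ → M}
    (s : Finset ℕ) (hs : ∀ k ∉ s, F k = 0) (hn : ∀ k, n ≤ k → F k = 0) :
    ∑ k ∈ range n, F k = ∑ k ∈ s, F k :=
  (sum_subset subset_union_left fun k _ hk => hn k (by simpa using hk)).trans
    (sum_subset subset_union_right fun k _ hk => hs k hk).symm

lemma Matrix.mulVec_apply_eq_sum_zeroExtend {R : Type*} [Semiring R] {n : ℕ}
    (A : Matrix (Fin n) (Fin n) R) (w : Fin n → R) {p : ℕ} (hp : p < n) (s : Finset ℕ)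
    (hs : ∀ q ∉ s, zeroExtend₂ A p q = 0) :
    (A *ᵥ w) ⟨p, hp⟩ = ∑ q ∈ s, zeroExtend₂ A p q * zeroExtend w q := by
  calc (A *ᵥ w) ⟨p, hp⟩ = ∑ j : Fin n, zeroExtend₂ A p j * zeroExtend w j := by
        simp [mulVec, dotProduct, zeroExtend₂_of_lt A hp]
    _ = ∑ q ∈ range n, zeroExtend₂ A p q * zeroExtend w q :=
        Fin.sum_univ_eq_sum_range (fun q => zeroExtend₂ A p q * zeroExtend w q) n
    _ = ∑ q ∈ s, zeroExtend₂ A p q * zeroExtend w q :=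
        sum_range_eq_sum_of_support_subset s (by simp +contextual [hs])
          fun q hq => by simp [zeroExtend_of_le w hq]

/-- The shape of `X - μ • 1` for `X ∈ Sym₀(P_n)`, with `d = -μ` and without the symmetry. -/
structure Matrix.HasPathPattern {R : Type*} [Zero R] {n : ℕ} (A : Matrix (Fin n) (Fin n) R)
    (d : R) : Prop where
  diag : ∀ i, A i i = d
  adj : ∀ i j, (pathGraph n).Adj i j → A i j ≠ 0
  nonadj : ∀ i j, i ≠ j → ¬(pathGraph n).Adj i j → A i j = 0

namespace Matrix.HasPathPattern

variable {R : Type*} {n : ℕ} {A : Matrix (Fin n) (Fin n) R} {d : R}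

lemma transpose [Zero R] (h : A.HasPathPattern d) : Aᵀ.HasPathPattern d where
  diag i := h.diag i
  adj i j hij := h.adj j i hij.symm
  nonadj i j hij hadj := h.nonadj j i (Ne.symm hij) fun h' => hadj h'.symm

lemma zeroExtend₂_eq_zero [Zero R] (h : A.HasPathPattern d) {p q : ℕ}
    (hpq : q + 1 < p ∨ p + 1 < q) : zeroExtend₂ A p q = 0 := by
  unfold zeroExtend₂
  split_ifs
  · exact h.nonadj _ _ (by simp only [ne_eq, Fin.ext_iff]; omega)
      (by simp only [pathGraph_adj, not_or]; omega)
  · rfl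

theorem eq_zero_of_mulVec_eq_zero [Semiring R] [NoZeroDivisors R] (h : A.HasPathPattern d)
    (hn : Even n) {w : Fin n → R} (hw : A *ᵥ w = 0) (h₁ : ∀ i : Fin n, (i : ℕ) = 1 → w i = 0) :
    w = 0 := by
  have hrow₀ : 0 < n → d * zeroExtend w 0 + zeroExtend₂ A 0 1 * zeroExtend w 1 = 0 := fun hn => by
    have := congrFun hw ⟨0, hn⟩
    rw [mulVec_apply_eq_sum_zeroExtend A w hn {0, 1} fun q hq => h.zeroExtend₂_eq_zero
      (by simp only [mem_insert, mem_singleton, not_or] at hq; omega)] at this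
    simpa [zeroExtend₂_of_lt A hn hn, h.diag] using this
  have hrow : ∀ p, p + 1 < n → zeroExtend₂ A (p + 1) p * zeroExtend w p +
      d * zeroExtend w (p + 1) + zeroExtend₂ A (p + 1) (p + 2) * zeroExtend w (p + 2) = 0 :=
    fun p hp => by
      have := congrFun hw ⟨p + 1, hp⟩
      rw [mulVec_apply_eq_sum_zeroExtend A w hp {p, p + 1, p + 2} fun q hq => h.zeroExtend₂_eq_zero
        (by simp only [mem_insert, mem_singleton, not_or] at hq; omega)] at this
      simpa [zeroExtend₂_of_lt A hp hp, h.diag, add_assoc] using this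
  have hl : ∀ p, p + 1 < n → zeroExtend₂ A (p + 1) p ≠ 0 := fun p hp => by
    rw [zeroExtend₂_of_lt A hp (by omega)]
    exact h.adj _ _ (by simp [pathGraph_adj])
  have hu : ∀ p, p + 1 < n → zeroExtend₂ A p (p + 1) ≠ 0 := fun p hp => by
    rw [zeroExtend₂_of_lt A (by omega) hp]
    exact h.adj _ _ (by simp [pathGraph_adj])
  have hw₁ : zeroExtend w 1 = 0 := by
    unfold zeroExtend
    split_ifs <;> simp [h₁]
  funext i
  simpa using eq_zero_of_recurrence hn hl hu (fun k hk => zeroExtend_of_le w hk) hrow₀ hrow hw₁ i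

theorem eq_zero_of_vecMul_eq_zero [CommSemiring R] [NoZeroDivisors R] (h : A.HasPathPattern d)
    (hn : Even n) {w : Fin n → R} (hw : w ᵥ* A = 0) (h₁ : ∀ i : Fin n, (i : ℕ) = 1 → w i = 0) :
    w = 0 :=
  h.transpose.eq_zero_of_mulVec_eq_zero hn (by rwa [mulVec_transpose]) h₁

end Matrix.HasPathPattern

section Rank

variable {K m m' ι ι' : Type*} [Field K] [Fintype m] [Fintype ι] {A : Matrix m ι K}

theorem Matrix.rank_eq_card_of_vecMul_eq_zero (hA : ∀ c, c ᵥ* A = 0 → c = 0) :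
    A.rank = Fintype.card m :=
  (vecMul_injective_iff.mp ((injective_iff_map_eq_zero A.vecMulLinear).mpr hA)).rank_matrix

theorem Matrix.rank_submatrix_eq_card [Fintype m'] {f : m' → m} (hf : Injective f)
    (hA : ∀ c, c ᵥ* A = 0 → (∀ i ∉ Set.range f, c i = 0) → c = 0) :
    (A.submatrix f id).rank = Fintype.card m' := by
  refine rank_eq_card_of_vecMul_eq_zero fun c hc => ?_
  have hext : ∀ i ∉ Set.range f, extend f c 0 i = 0 := fun i hi => extend_apply' _ _ _ hi
  have hker : extend f c 0 ᵥ* A = 0 := by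
    funext j
    rw [← congrFun hc j]
    exact (Fintype.sum_of_injective f hf _ _ (fun i hi => by simp [hext i hi])
      fun r => by simp [hf.extend_apply]).symm
  funext r
  simpa [hf.extend_apply] using congrFun (hA _ hker hext) (f r)

theorem Matrix.rank_fromCols_replicateCol_eq_card [Fintype ι'] [Nonempty ι'] {v : m → K}
    (hA : ∀ c, c ᵥ* A = 0 → c ⬝ᵥ v = 0 → c = 0) :
    (fromCols A (replicateCol ι' v)).rank = Fintype.card m := by
  refine rank_eq_card_of_vecMul_eq_zero fun c hc => ?_
  rw [vecMul_fromCols] at hc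
  exact hA c (funext fun j => congrFun hc (Sum.inl j))
    (congrFun hc (Sum.inr (Classical.arbitrary ι')))

end Rank

/-- For even `n ≥ 4` and `X ∈ Sym₀(P_n)`, deleting row 2 from `X - λI` always leaves
rank `n-1`; equivalently `(X, e_2)` is controllable for all `X ∈ Sym₀(P_n)`.
Vertices `1,…,n` are represented by `Fin n`. -/
theorem stmt14 (n : ℕ) (hneven : Even n) (X : Matrix (Fin n) (Fin n) ℝ)
    (hedge : ∀ a b : Fin n, (a.1 + 1 = b.1 ∨ b.1 + 1 = a.1) → X a b ≠ 0)
    (hnonedge : ∀ a b : Fin n, ¬(a.1 + 1 = b.1 ∨ b.1 + 1 = a.1) → X a b = 0) :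
    (∀ μ : ℂ,
      (Matrix.of fun (r : Fin (n - 1)) (c : Fin n) =>
        (X.map Complex.ofReal - μ • 1)
          ⟨if r.1 < 1 then r.1 else r.1 + 1, by have := r.2; split <;> omega⟩ c).rank
        = n - 1) ∧
    (∀ μ : ℂ,
      (Matrix.fromCols (X.map Complex.ofReal - μ • 1)
        (Matrix.of fun (r : Fin n) (_ : Fin 1) => if r.1 = 1 then (1 : ℂ) else 0)).rank
          = n) := by
  have hpattern (μ : ℂ) : (X.map Complex.ofReal - μ • 1).HasPathPattern (-μ) :=
    ⟨fun i => by simp [hnonedge i i (by omega)],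
      fun i j hij => by simp [one_apply_ne hij.ne, hedge i j (pathGraph_adj.mp hij)],
      fun i j hij hadj => by simp [one_apply_ne hij, hnonedge i j (pathGraph_adj.not.mp hadj)]⟩
  refine ⟨fun μ => ?_, fun μ => ?_⟩
  · have hrank := rank_submatrix_eq_card (A := X.map Complex.ofReal - μ • 1)
      (f := fun r : Fin (n - 1) =>
        ⟨if r.1 < 1 then r.1 else r.1 + 1, by have := r.2; split <;> omega⟩) ?_
      fun c hc h₁ => (hpattern μ).eq_zero_of_vecMul_eq_zero hneven hc fun i hi => h₁ i ?_
    · rwa [Fintype.card_fin] at hrank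
    · intro a b hab
      simp only [Fin.mk.injEq] at hab
      ext
      split_ifs at hab <;> omega
    · rintro ⟨r, rfl⟩
      simp only at hi
      split_ifs at hi <;> omega
  · have hrank := rank_fromCols_replicateCol_eq_card (ι' := Fin 1)
      (A := X.map Complex.ofReal - μ • 1) (v := fun r => if r.1 = 1 then 1 else 0)
      fun c hc hv => (hpattern μ).eq_zero_of_vecMul_eq_zero hneven hc fun i hi => ?_
    · rwa [Fintype.card_fin] at hrank
    · simp only [dotProduct, mul_ite, mul_one, mul_zero] at hv
      rwa [Finset.sum_eq_single i (fun j _ hji => if_neg fun hj => hji (Fin.ext (hj.trans hi.symm)))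
        (by simp), if_pos hi] at hv
end

section
/- Let n ≥ 5 and 3 ≤ i ≤ n - 2. Then there exists X ∈ Sym₀(P_n) and λ ∈ ℝ such that the matrix obtained from X - λI by deleting row i has rank < n - 1; i.e., (X, e_i) fails to be controllable for some X ∈ Sym₀(P_n). -/
/-!
Deleting vertex `i` splits the path into the sub-paths on the vertices before and after it. On a
path with `m` vertices and constant edge weight `c`, the sine arc `k ↦ sin (k π / (m + 1))` is an
eigenvector for the eigenvalue `2 c cos (π / (m + 1))`. Giving the left sub-path the weight
`cos (π / (n - i + 1))` and the right one the weight `cos (π / i)` makes both have the eigenvalue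
`λ = 2 cos (π / i) cos (π / (n - i + 1))`; these weights are nonzero because both sub-paths have at
least two vertices. The two sine arcs, extended by zero, satisfy `(X - λ I) v = 0` in every row
except row `i` (index `i - 1` in `Fin n`), so the matrix with row `i` deleted has a kernel of
dimension at least two.
-/

open Matrix Real Set

theorem Matrix.rank_add_card_le_of_mulVec_eq_zero {K m n ι : Type*} [Field K] [Finite m]
    [Fintype n] [Fintype ι] {A : Matrix m n K} {v : ι → n → K} (hv : LinearIndependent K v)
    (hAv : ∀ j, A *ᵥ v j = 0) : A.rank + Fintype.card ι ≤ Fintype.card n := by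
  have hrank : (Matrix.of v)ᵀ.rank = Fintype.card ι := by
    rw [rank_transpose]
    exact hv.rank_matrix
  refine hrank ▸ rank_add_rank_le_card_of_mul_eq_zero ?_
  ext a j
  simpa [Matrix.mul_apply, Matrix.mulVec, dotProduct] using congrFun (hAv j) a

theorem linearIndependent_pair_of_apply_ne_zero {R ι : Type*} [Ring R] [NoZeroDivisors R]
    {y z : ι → R} {a b : ι} (hya : y a ≠ 0) (hza : z a = 0) (hyb : y b = 0) (hzb : z b ≠ 0) :
    LinearIndependent R ![y, z] := by
  rw [LinearIndependent.pair_iff]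
  intro p q hpq
  have ha := congrFun hpq a
  have hb := congrFun hpq b
  simp only [Pi.add_apply, Pi.smul_apply, smul_eq_mul, Pi.zero_apply, hza, hyb] at ha hb
  simp_all

theorem Fin.sum_ite_cast_eq {M : Type*} [AddCommMonoid M] (n : ℕ) (t : ℤ) (c : M) :
    ∑ b : Fin n, (if (b : ℤ) = t then c else 0) = if 0 ≤ t ∧ t < n then c else 0 := by
  split_ifs with ht
  · lift t to ℕ using ht.1
    rw [Finset.sum_eq_single ⟨t, by omega⟩ (fun b _ hb => if_neg ?_) (by simp)]
    · simp
    · exact fun h => hb (Fin.ext (by simpa using h))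
  · exact Finset.sum_eq_zero fun b _ => if_neg (by omega)

theorem indicator_Icc_eq_zero {M : Type*} [Zero M] {g : ℤ → M} {s e k : ℤ} (hs : g s = 0) (he : g e = 0)
    (hk : ¬(s < k ∧ k < e)) : (Icc s e).indicator g k = 0 := by
  by_cases h : k ∈ Icc s e
  · rw [indicator_of_mem h]
    rcases (by rw [mem_Icc] at h; omega : k = s ∨ k = e) with rfl | rfl <;> assumption
  · exact indicator_of_notMem h g

theorem indicator_Icc_recurrence {R : Type*} [CommSemiring R] {c ν : R} {g w : ℤ → R} {s e k : ℤ}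
    (hg : ∀ k, g (k - 1) + g (k + 1) = ν * g k) (hs : g s = 0) (he : g e = 0)
    (hw : ∀ k, s ≤ k → k < e → w k = c) (hks : k ≠ s) (hke : k ≠ e) :
    w (k - 1) * (Icc s e).indicator g (k - 1) + w k * (Icc s e).indicator g (k + 1) =
      c * ν * (Icc s e).indicator g k := by
  by_cases hin : s < k ∧ k < e
  · rw [indicator_of_mem (by constructor <;> omega), indicator_of_mem (by constructor <;> omega),
      indicator_of_mem (by constructor <;> omega), hw (k - 1) (by omega) (by omega),
      hw k (by omega) (by omega), ← mul_add, hg, mul_assoc]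
  · rw [indicator_Icc_eq_zero hs he (by omega), indicator_Icc_eq_zero hs he (by omega),
      indicator_Icc_eq_zero hs he (by omega)]
    ring

def pathMatrix {R : Type*} [Zero R] (n : ℕ) (w : ℤ → R) : Matrix (Fin n) (Fin n) R :=
  Matrix.of fun a b => if a.1 + 1 = b.1 then w a.1 else if b.1 + 1 = a.1 then w b.1 else 0

section pathMatrix

variable {R : Type*} {n : ℕ} {w : ℤ → R}

theorem pathMatrix_isSymm [Zero R] : (pathMatrix n w).IsSymm := by
  ext a b
  simp only [pathMatrix, transpose_apply, of_apply]
  split_ifs <;> first | rfl | omega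

theorem pathMatrix_apply_ne_zero [Zero R] (hw : ∀ k, w k ≠ 0) {a b : Fin n}
    (hab : a.1 + 1 = b.1 ∨ b.1 + 1 = a.1) : pathMatrix n w a b ≠ 0 := by
  simp only [pathMatrix, of_apply]
  split_ifs <;> first | exact hw _ | omega

theorem pathMatrix_apply_eq_zero [Zero R] {a b : Fin n} (hab : ¬(a.1 + 1 = b.1 ∨ b.1 + 1 = a.1)) :
    pathMatrix n w a b = 0 := by
  simp only [pathMatrix, of_apply]
  rw [if_neg (by omega), if_neg (by omega)]

theorem pathMatrix_mulVec_apply [NonUnitalNonAssocSemiring R] {f : ℤ → R} (hf₀ : f (-1) = 0) (hfn : f n = 0) (a : Fin n) :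
    (pathMatrix n w *ᵥ fun b => f b) a = w (a - 1) * f (a - 1) + w a * f (a + 1) := by
  have hsplit : ∀ b : Fin n, pathMatrix n w a b * f b =
      (if (b : ℤ) = a - 1 then w (a - 1) * f (a - 1) else 0) +
        (if (b : ℤ) = a + 1 then w a * f (a + 1) else 0) := by
    intro b
    simp only [pathMatrix, of_apply]
    split_ifs <;> first | omega | simp_all
  simp only [mulVec, dotProduct, hsplit, Finset.sum_add_distrib, Fin.sum_ite_cast_eq]
  congr 1
  · split_ifs
    · rfl
    · rw [show (a : ℤ) - 1 = -1 by omega, hf₀, mul_zero]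
  · split_ifs
    · rfl
    · rw [show (a : ℤ) + 1 = n by omega, hfn, mul_zero]

theorem pathMatrix_sub_smul_mulVec_indicator_apply [CommRing R] {g : ℤ → R} {c ν : R} {s e : ℤ}
    (hg : ∀ k, g (k - 1) + g (k + 1) = ν * g k) (hs : g s = 0) (he : g e = 0)
    (hw : ∀ k, s ≤ k → k < e → w k = c) (hs₀ : -1 ≤ s) (hen : e ≤ n)
    {a : Fin n} (has : (a : ℤ) ≠ s) (hae : (a : ℤ) ≠ e) :
    ((pathMatrix n w - (c * ν) • 1) *ᵥ fun b : Fin n => (Icc s e).indicator g b) a = 0 := by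
  rw [sub_mulVec, smul_mulVec, one_mulVec, Pi.sub_apply, Pi.smul_apply,
    pathMatrix_mulVec_apply (indicator_Icc_eq_zero hs he (by omega))
      (indicator_Icc_eq_zero hs he (by omega)),
    indicator_Icc_recurrence hg hs he hw has hae, smul_eq_mul, sub_self]

end pathMatrix

noncomputable def sineArc (s e k : ℤ) : ℝ := sin (π * (k - s) / (e - s))

section sineArc

variable {s e : ℤ}

theorem sineArc_left : sineArc s e s = 0 := by simp [sineArc]

theorem sineArc_right (h : s ≠ e) : sineArc s e e = 0 := by
  have : (e : ℝ) - s ≠ 0 := sub_ne_zero.mpr (by exact_mod_cast h.symm)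
  simp [sineArc, mul_div_assoc, div_self this]

theorem sineArc_sub_one_add_sineArc_add_one (k : ℤ) :
    sineArc s e (k - 1) + sineArc s e (k + 1) = 2 * cos (π / (e - s)) * sineArc s e k := by
  have sin_sub_add_sin_add (x y : ℝ) : sin (x - y) + sin (x + y) = 2 * cos y * sin x := by
    rw [sin_sub, sin_add]
    ring
  simp only [sineArc]
  convert sin_sub_add_sin_add (π * (k - s) / (e - s)) (π / (e - s)) using 3 <;> push_cast <;> ring

theorem sineArc_pos {k : ℤ} (hs : s < k) (he : k < e) : 0 < sineArc s e k := by
  have hse : (0 : ℝ) < e - s := by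
    rw [sub_pos]
    exact_mod_cast hs.trans he
  have hke : (k : ℝ) < e := by exact_mod_cast he
  apply sin_pos_of_pos_of_lt_pi
  · apply div_pos (mul_pos pi_pos ?_) hse
    rw [sub_pos]
    exact_mod_cast hs
  · rw [div_lt_iff₀ hse]
    exact mul_lt_mul_of_pos_left (by linarith) pi_pos

end sineArc

theorem cos_pi_div_pos {m : ℝ} (hm : 2 < m) : 0 < cos (π / m) := by
  apply cos_pos_of_mem_Ioo ⟨by linarith [div_pos pi_pos (by linarith : (0 : ℝ) < m), pi_pos], ?_⟩
  rwa [div_lt_div_iff_of_pos_left pi_pos (by linarith) two_pos]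

-- The arcs live on `[-1, d]` and `[d, n]`: they vanish at the deleted vertex `d` and at the
-- virtual vertices `-1` and `n`, which is why vertices are indexed by `ℤ`.
theorem exists_pathMatrix_linearIndependent_kernel_pair {n : ℕ} {d : ℤ} (hd : 2 ≤ d)
    (hdn : d + 3 ≤ n) :
    ∃ w : ℤ → ℝ, (∀ k, w k ≠ 0) ∧ ∃ μ : ℝ, ∃ y z : Fin n → ℝ, LinearIndependent ℝ ![y, z] ∧
      ∀ a : Fin n, (a : ℤ) ≠ d →
        ((pathMatrix n w - μ • 1) *ᵥ y) a = 0 ∧ ((pathMatrix n w - μ • 1) *ᵥ z) a = 0 := by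
  set α := cos (π / ((d : ℝ) - ((-1 : ℤ) : ℝ)))
  set β := cos (π / (((n : ℤ) : ℝ) - d))
  have hdR : (2 : ℝ) ≤ d := by exact_mod_cast hd
  have hdnR : (d : ℝ) + 3 ≤ n := by exact_mod_cast hdn
  have hα : 0 < α := cos_pi_div_pos (by push_cast; linarith)
  have hβ : 0 < β := cos_pi_div_pos (by push_cast; linarith)
  refine ⟨fun k => if k < d then β else α, fun k => by dsimp only; split_ifs <;> positivity,
    β * (2 * α), fun b => (Icc (-1) d).indicator (sineArc (-1) d) b,
    fun b => (Icc d n).indicator (sineArc d n) b, ?_, fun a ha => ⟨?_, ?_⟩⟩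
  · refine linearIndependent_pair_of_apply_ne_zero (a := ⟨0, by omega⟩) (b := ⟨n - 1, by omega⟩)
      ?_ (indicator_of_notMem (by simp; omega) _) (indicator_of_notMem (by simp; omega) _) ?_
    · rw [indicator_of_mem (by simp; omega)]
      exact (sineArc_pos (by simp) (by simp; omega)).ne'
    · rw [indicator_of_mem (by simp; omega)]
      exact (sineArc_pos (by simp; omega) (by simp; omega)).ne'
  · exact pathMatrix_sub_smul_mulVec_indicator_apply sineArc_sub_one_add_sineArc_add_one
      sineArc_left (sineArc_right (by omega)) (fun k _ hk => if_pos hk) le_rfl (by omega)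
      (by omega) ha
  · rw [show β * (2 * α) = α * (2 * β) by ring]
    exact pathMatrix_sub_smul_mulVec_indicator_apply sineArc_sub_one_add_sineArc_add_one
      sineArc_left (sineArc_right (by omega)) (fun k hk _ => if_neg (by omega)) (by omega) le_rfl
      ha (by omega)

/-- For `n ≥ 5` and `3 ≤ i ≤ n-2` there exists `X ∈ Sym₀(P_n)` and `λ ∈ ℝ` such that
deleting row `i` from `X - λI` drops the rank below `n-1`; i.e. `(X, e_i)` fails to be
controllable for some `X ∈ Sym₀(P_n)`. Vertices `1,…,n` are represented by `Fin n`. -/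
theorem stmt15 (n : ℕ) (i : ℕ) (hi1 : 3 ≤ i) (hi2 : i ≤ n - 2) :
    ∃ X : Matrix (Fin n) (Fin n) ℝ,
      X.IsSymm ∧
      (∀ a b : Fin n, (a.1 + 1 = b.1 ∨ b.1 + 1 = a.1) → X a b ≠ 0) ∧
      (∀ a b : Fin n, ¬(a.1 + 1 = b.1 ∨ b.1 + 1 = a.1) → X a b = 0) ∧
      ∃ lam : ℝ,
        (Matrix.of fun (r : Fin (n - 1)) (c : Fin n) =>
          (X - lam • 1) ⟨if r.1 < i - 1 then r.1 else r.1 + 1, by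
            have := r.2; split <;> omega⟩ c).rank < n - 1 := by
  obtain ⟨w, hw, μ, y, z, hind, hker⟩ :=
    exists_pathMatrix_linearIndependent_kernel_pair (n := n) (d := i - 1) (by omega) (by omega)
  refine ⟨pathMatrix n w, pathMatrix_isSymm, fun a b => pathMatrix_apply_ne_zero hw,
    fun a b => pathMatrix_apply_eq_zero, μ, ?_⟩
  have hrank : ∀ A : Matrix (Fin (n - 1)) (Fin n) ℝ, A *ᵥ y = 0 → A *ᵥ z = 0 → A.rank < n - 1 :=
    fun A hAy hAz => by
      have := A.rank_add_card_le_of_mulVec_eq_zero hind (Fin.forall_fin_two.2 ⟨hAy, hAz⟩)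
      simp only [Fintype.card_fin] at this
      omega
  have hrow (r : Fin (n - 1)) : ((if r.1 < i - 1 then r.1 else r.1 + 1 : ℕ) : ℤ) ≠ i - 1 := by
    split <;> omega
  exact hrank _ (funext fun r => (hker _ (hrow r)).1) (funext fun r => (hker _ (hrow r)).2)
end

section
/- Let n ≥ 5 be odd. For every X ∈ Sym₀(C_n) (real symmetric n×n, zero diagonal, off-diagonal entry (i,j) nonzero iff i - j ≡ ±1 mod n) and every λ ∈ ℂ, the matrix obtained from X - λI by deleting rows 1 and 3 has rank n - 2; equivalently, (X, [e_1, e_3]) is controllable for all X ∈ Sym₀(C_n). -/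
/-!
A left null vector `w` of `X - λI` satisfies, at every vertex `j` of the cycle,
`X (j-1) j * w (j-1) + X (j+1) j * w (j+1) = λ * w j` with `X (j+1) j ≠ 0`, so `w (j+1)` is
determined by `w (j-1)` and `w j`. If `λ ≠ 0`, then `w 0 = w 2 = 0` forces `w 1 = 0`, and the
zeros propagate around the cycle from the consecutive pair `1, 2`. If `λ = 0`, the zeros
propagate in steps of two, which reach every vertex because `n` is odd. Both rank conditions
say precisely that no nonzero such `w` vanishes at `0` and `2`.
-/

open Matrix Function

theorem Matrix.rank_eq_card_of_vecMul_eq_zero_s17 {m n K : Type*} [Fintype m] [Fintype n] [Field K]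
    (M : Matrix m n K) (h : ∀ w, w ᵥ* M = 0 → w = 0) : M.rank = Fintype.card m :=
  (vecMul_injective_iff.mp ((injective_iff_map_eq_zero M.vecMulLinear).mpr h)).rank_matrix

theorem Matrix.vecMul_submatrix_eq_extend {m m' n R : Type*} [Fintype m] [Fintype m']
    [NonUnitalNonAssocSemiring R] (M : Matrix m n R) {e : m' → m} (he : Injective e)
    (w : m' → R) : w ᵥ* M.submatrix e id = extend e w 0 ᵥ* M := by
  ext j
  refine Fintype.sum_of_injective e he _ _ (fun i hi => ?_) (fun r => ?_)
  · rw [extend_apply' _ _ _ (by simpa using hi), Pi.zero_apply, zero_mul]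
  · rw [he.extend_apply]; rfl

theorem Matrix.rank_submatrix_eq_card_s17 {m m' n K : Type*} [Fintype m] [Fintype m'] [Fintype n]
    [Field K]
    (M : Matrix m n K) {e : m' → m} (he : Injective e)
    (h : ∀ v, v ᵥ* M = 0 → (∀ i ∉ Set.range e, v i = 0) → v = 0) :
    (M.submatrix e id).rank = Fintype.card m' := by
  refine rank_eq_card_of_vecMul_eq_zero_s17 _ fun w hw => ?_
  have hext := h (extend e w 0) (by rwa [← vecMul_submatrix_eq_extend M he])
    fun i hi => extend_apply' _ _ _ (by simpa using hi)
  funext r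
  simpa [he.extend_apply] using congrFun hext (e r)

theorem Fin.val_add_one_mod_eq_iff {n : ℕ} [NeZero n] (a b : Fin n) :
    (a.1 + 1) % n = b.1 ↔ a + 1 = b := by
  rw [Fin.ext_iff, Fin.val_add, Fin.val_one', Nat.add_mod_mod]

theorem Fin.val_two_of_three_le {n : ℕ} [NeZero n] (hn : 3 ≤ n) : ((2 : Fin n) : ℕ) = 2 :=
  Nat.mod_eq_of_lt hn

section
open Fin.CommRing

theorem Fin.eq_zero_of_two_consecutive {n : ℕ} [NeZero n] {α : Type*} [Zero α] {v : Fin n → α}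
    (hstep : ∀ i, v i = 0 → v (i + 1) = 0 → v (i + 2) = 0) {i₀ : Fin n}
    (h₀ : v i₀ = 0) (h₁ : v (i₀ + 1) = 0) : v = 0 := by
  have hpair : ∀ k : ℕ, v (i₀ + k) = 0 ∧ v (i₀ + k + 1) = 0 := by
    intro k
    induction k with
    | zero => simpa using ⟨h₀, h₁⟩
    | succ k ih =>
      refine ⟨by simpa [add_assoc] using ih.2, ?_⟩
      simpa [add_assoc, one_add_one_eq_two] using hstep _ ih.1 ih.2
  funext j
  simpa using (hpair (j - i₀).val).1

theorem Fin.eq_zero_of_step_two {n : ℕ} [NeZero n] (hodd : Odd n) {α : Type*} [Zero α]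
    {v : Fin n → α} (hstep : ∀ i, v i = 0 → v (i + 2) = 0) {i₀ : Fin n} (h₀ : v i₀ = 0) :
    v = 0 := by
  have hmul : ∀ k : ℕ, v (i₀ + 2 * k) = 0 := by
    intro k
    induction k with
    | zero => simpa using h₀
    | succ k ih => simpa [mul_add, add_assoc] using hstep _ ih
  obtain ⟨t, rfl⟩ := hodd
  -- `2` is invertible modulo an odd number `2t + 1`, with inverse `t + 1`.
  have htwo : (2 : Fin (2 * t + 1)) * (t + 1) = 1 := by
    have : ((2 * t + 1 : ℕ) : Fin (2 * t + 1)) = 0 := CharP.cast_eq_zero _ _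
    push_cast at this
    linear_combination this
  funext j
  have := hmul ((t + 1) * (j - i₀).val)
  push_cast at this
  rwa [← mul_assoc, htwo, one_mul, add_sub_cancel] at this

theorem Fin.eq_zero_of_three_term_recurrence {n : ℕ} [NeZero n] (hodd : Odd n) {R : Type*}
    [CommRing R] [NoZeroDivisors R] {a b : Fin n → R} (hb : ∀ i, b i ≠ 0) {μ : R}
    {v : Fin n → R} (hrec : ∀ i, a i * v (i - 1) + b i * v (i + 1) = μ * v i)
    (h₀ : v 0 = 0) (h₂ : v 2 = 0) : v = 0 := by
  have hforward : ∀ i, v i = 0 → b (i + 1) * v (i + 2) = μ * v (i + 1) := fun i hi => by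
    simpa [hi, add_assoc, one_add_one_eq_two] using hrec (i + 1)
  rcases eq_or_ne μ 0 with rfl | hμ
  · refine eq_zero_of_step_two hodd (fun i hi => ?_) h₀
    simpa [hb] using hforward i hi
  · have h₁ : v 1 = 0 := by
      simpa [h₀, h₂, one_add_one_eq_two, hμ] using (hrec 1).symm
    refine eq_zero_of_two_consecutive (fun i hi hi₁ => ?_) h₁ (by rwa [one_add_one_eq_two])
    simpa [hb, hi₁] using hforward i hi

theorem Matrix.vecMul_apply_of_cycle_support {n : ℕ} [NeZero n] (hn : 3 ≤ n) {R : Type*}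
    [NonUnitalNonAssocSemiring R] {Y : Matrix (Fin n) (Fin n) R}
    (hY : ∀ i j, Y i j ≠ 0 → i + 1 = j ∨ j + 1 = i) (w : Fin n → R) (j : Fin n) :
    (w ᵥ* Y) j = w (j - 1) * Y (j - 1) j + w (j + 1) * Y (j + 1) j := by
  refine Fintype.sum_eq_add (j - 1) (j + 1) (fun h => ?_) (fun i ⟨hi₁, hi₂⟩ => ?_)
  · have h2 : (2 : Fin n) = 0 := by linear_combination -h
    have := congrArg Fin.val h2
    rw [Fin.val_two_of_three_le hn, Fin.val_zero] at this
    exact two_ne_zero this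
  · by_contra hne
    rcases hY i j (right_ne_zero_of_mul hne) with h | h
    · exact hi₁ (eq_sub_of_add_eq h)
    · exact hi₂ h.symm

end

theorem Matrix.eq_zero_of_vecMul_eq_smul_of_cycle_support {n : ℕ} [NeZero n] (hn : 3 ≤ n)
    (hodd : Odd n) {R : Type*} [CommRing R] [NoZeroDivisors R] {Y : Matrix (Fin n) (Fin n) R}
    (hY : ∀ i j, Y i j ≠ 0 → i + 1 = j ∨ j + 1 = i) (hadj : ∀ i, Y (i + 1) i ≠ 0) {μ : R}
    {w : Fin n → R} (hw : w ᵥ* Y = μ • w) (h₀ : w 0 = 0) (h₂ : w 2 = 0) : w = 0 := by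
  refine Fin.eq_zero_of_three_term_recurrence hodd (a := fun j => Y (j - 1) j) (μ := μ) hadj
    (fun j => ?_) h₀ h₂
  rw [mul_comm (Y _ _), mul_comm (Y _ _), ← vecMul_apply_of_cycle_support hn hY, hw,
    Pi.smul_apply, smul_eq_mul]

theorem eq_zero_of_vecMul_ofReal_sub_smul_eq_zero {n : ℕ} [NeZero n] (hn : 3 ≤ n)
    (hodd : Odd n) {X : Matrix (Fin n) (Fin n) ℝ} (hadj : ∀ i, X (i + 1) i ≠ 0)
    (hsupp : ∀ i j, ¬(i + 1 = j ∨ j + 1 = i) → X i j = 0) {μ : ℂ} {w : Fin n → ℂ}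
    (hw : w ᵥ* (X.map Complex.ofReal - μ • 1) = 0) (h₀ : w 0 = 0) (h₂ : w 2 = 0) : w = 0 := by
  rw [vecMul_sub, vecMul_smul, vecMul_one, sub_eq_zero] at hw
  refine eq_zero_of_vecMul_eq_smul_of_cycle_support hn hodd (fun i j hij => ?_)
    (fun i => by simpa using hadj i) hw h₀ h₂
  by_contra h
  exact hij (by simp [hsupp i j h])

def skipZeroTwo (n : ℕ) (r : Fin (n - 2)) : Fin n :=
  ⟨if r.1 = 0 then 1 else r.1 + 2, by have := r.2; split <;> omega⟩

theorem skipZeroTwo_injective (n : ℕ) : Injective (skipZeroTwo n) := by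
  intro a b hab
  have := congrArg Fin.val hab
  simp only [skipZeroTwo] at this
  ext
  split_ifs at this <;> omega

theorem val_skipZeroTwo_ne (n : ℕ) (r : Fin (n - 2)) :
    (skipZeroTwo n r).val ≠ 0 ∧ (skipZeroTwo n r).val ≠ 2 := by
  simp only [skipZeroTwo]
  split_ifs <;> omega

/-- For odd `n ≥ 5` and `X ∈ Sym₀(C_n)`, deleting rows 1 and 3 from `X - λI` always
leaves rank `n-2`; equivalently `(X, [e_1, e_3])` is controllable for all
`X ∈ Sym₀(C_n)`. Vertices `1,…,n` are represented by `Fin n`. -/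
theorem stmt17 (n : ℕ) (hn : 5 ≤ n) (hodd : Odd n) (X : Matrix (Fin n) (Fin n) ℝ)
    (hedge : ∀ a b : Fin n, ((a.1 + 1) % n = b.1 ∨ (b.1 + 1) % n = a.1) → X a b ≠ 0)
    (hnonedge : ∀ a b : Fin n, ¬((a.1 + 1) % n = b.1 ∨ (b.1 + 1) % n = a.1) → X a b = 0) :
    (∀ μ : ℂ,
      (Matrix.of fun (r : Fin (n - 2)) (c : Fin n) =>
        (X.map Complex.ofReal - μ • 1)
          ⟨if r.1 = 0 then 1 else r.1 + 2, by have := r.2; split <;> omega⟩ c).rank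
        = n - 2) ∧
    (∀ μ : ℂ,
      (Matrix.fromCols (X.map Complex.ofReal - μ • 1)
        (Matrix.of fun (r : Fin n) (c : Fin 2) =>
          if r.1 = (if c = 0 then 0 else 2) then (1 : ℂ) else 0)).rank = n) := by
  have : NeZero n := ⟨by omega⟩
  have hn₃ : 3 ≤ n := by omega
  simp only [Fin.val_add_one_mod_eq_iff] at hedge hnonedge
  have hkey (μ : ℂ) (w : Fin n → ℂ) := eq_zero_of_vecMul_ofReal_sub_smul_eq_zero (μ := μ) (w := w)
    hn₃ hodd (fun i => hedge (i + 1) i (Or.inr rfl)) hnonedge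
  refine ⟨fun μ => ?_, fun μ => ?_⟩
  · show ((X.map Complex.ofReal - μ • 1).submatrix (skipZeroTwo n) id).rank = n - 2
    rw [rank_submatrix_eq_card_s17 _ (skipZeroTwo_injective n), Fintype.card_fin]
    intro v hv hout
    refine hkey μ v hv (hout 0 ?_) (hout 2 ?_) <;> rintro ⟨r, hr⟩
    · exact (val_skipZeroTwo_ne n r).1 (by rw [hr, Fin.val_zero])
    · exact (val_skipZeroTwo_ne n r).2 (by rw [hr, Fin.val_two_of_three_le hn₃])
  · rw [rank_eq_card_of_vecMul_eq_zero_s17, Fintype.card_fin]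
    intro w hw
    rw [vecMul_fromCols] at hw
    have hval₂ (i : Fin n) : i.val = 2 ↔ i = 2 := by
      rw [Fin.ext_iff, Fin.val_two_of_three_le hn₃]
    have h₀ := congrFun hw (Sum.inr 0)
    have h₂ := congrFun hw (Sum.inr 1)
    simp only [Fin.isValue, Sum.elim_inr, vecMul, dotProduct, of_apply, ↓reduceIte,
      Fin.val_eq_zero_iff, mul_ite, mul_one, mul_zero, Finset.sum_ite_eq', Finset.mem_univ,
      Pi.zero_apply, one_ne_zero, hval₂] at h₀ h₂
    exact hkey μ w (funext fun j => congrFun hw (Sum.inl j)) h₀ h₂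
end

section
/- For every n ≥ 3, every X ∈ Sym(C_n) (real symmetric n×n with X[i][j] ≠ 0 iff i - j ≡ ±1 mod n for i ≠ j, arbitrary diagonal) and every λ ∈ ℂ, the matrix obtained from X - λI by deleting rows 1 and 2 has rank n - 2; consequently (X, [e_1, e_2]) is controllable for all X ∈ Sym(C_n). -/
/-!
Order the rows of `X - λI` by index. Row `i ≥ 3` has the nonzero entry `X[i][i-1]` in column
`i - 1`, and every later row vanishes there, since the only edge of `C_n` that jumps backwards
by more than one is `{n, 1}`, which ends in column `1`. So in every nontrivial combination of
rows `3, …, n`, the last row with nonzero coefficient leaves a nonzero entry in its pivot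
column. Adjoining `e_1, e_2` supplies pivots for rows `1` and `2` as well.
-/

theorem Matrix.linearIndependent_row_of_exists_pivot {κ ι R : Type*} [LinearOrder κ]
    [Fintype κ] [Ring R] [NoZeroDivisors R] (N : Matrix κ ι R)
    (hpiv : ∀ k, ∃ j, N k j ≠ 0 ∧ ∀ k', k < k' → N k' j = 0) :
    LinearIndependent R N.row := by
  rw [Fintype.linearIndependent_iff]
  intro g hg k
  induction k using WellFoundedLT.induction with
  | ind k ih =>
    obtain ⟨j, hkj, hbelow⟩ := hpiv k
    have hsum : ∑ k', g k' * N k' j = g k * N k j := by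
      refine Finset.sum_eq_single k (fun k' _ hk' => ?_) (by simp)
      rcases lt_or_gt_of_ne hk' with hlt | hgt
      · rw [ih k' hlt, zero_mul]
      · rw [hbelow k' hgt, mul_zero]
    have hcol := congrFun hg j
    simp only [Finset.sum_apply, Pi.smul_apply, Matrix.row_apply, smul_eq_mul, Pi.zero_apply,
      hsum] at hcol
    exact (mul_eq_zero.mp hcol).resolve_right hkj

def cycleAdj (n : ℕ) (a b : Fin n) : Prop :=
  (a.1 + 1) % n = b.1 ∨ (b.1 + 1) % n = a.1

theorem cycleAdj_of_val_add_one_eq {n : ℕ} {a b : Fin n} (h : b.1 + 1 = a.1) :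
    cycleAdj n a b :=
  Or.inr (by rw [h, Nat.mod_eq_of_lt a.2])

theorem not_cycleAdj_of_val_add_one_lt {n : ℕ} {a b : Fin n} (hb : 1 ≤ b.1)
    (h : b.1 + 1 < a.1) : ¬cycleAdj n a b := by
  have ha := a.2
  rintro (hab | hba)
  · rcases Nat.lt_or_ge (a.1 + 1) n with hlt | hge
    · rw [Nat.mod_eq_of_lt hlt] at hab; omega
    · rw [show a.1 + 1 = n by omega, Nat.mod_self] at hab; omega
  · rw [Nat.mod_eq_of_lt (by omega)] at hba; omega

theorem cycle_sub_smul_one_pivot {n : ℕ} {X : Matrix (Fin n) (Fin n) ℝ}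
    (hedge : ∀ a b : Fin n, cycleAdj n a b → X a b ≠ 0)
    (hnonedge : ∀ a b : Fin n, a ≠ b → ¬cycleAdj n a b → X a b = 0) (μ : ℂ)
    {a b : Fin n} (hb : 1 ≤ b.1) (hab : b.1 + 1 = a.1) :
    (X.map Complex.ofReal - μ • 1) a b ≠ 0 ∧
      ∀ a', a < a' → (X.map Complex.ofReal - μ • 1) a' b = 0 := by
  have hoff : ∀ a' : Fin n, b.1 < a'.1 → (X.map Complex.ofReal - μ • 1) a' b = X a' b :=
    fun a' h => by simp [Matrix.one_apply_ne (Fin.ne_of_gt h)]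
  refine ⟨?_, fun a' ha' => ?_⟩
  · rw [hoff a (by omega), Complex.ofReal_ne_zero]
    exact hedge a b (cycleAdj_of_val_add_one_eq hab)
  · have ha' : a.1 < a'.1 := ha'
    rw [hoff a' (by omega), hnonedge a' b (Fin.ne_of_gt (by omega))
      (not_cycleAdj_of_val_add_one_lt hb (by omega)), Complex.ofReal_zero]

theorem fromCols_first_two_basis_pivot {R m : Type*} [Zero R] [One R] [NeZero (1 : R)]
    {n : ℕ} (A : Matrix (Fin n) m R) {i : Fin n} (hi : i.1 < 2) :
    let N := Matrix.fromCols A (Matrix.of fun (r : Fin n) (c : Fin 2) =>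
      if r.1 = (if c = 0 then 0 else 1) then (1 : R) else 0)
    N i (.inr ⟨i.1, hi⟩) ≠ 0 ∧ ∀ i', i < i' → N i' (.inr ⟨i.1, hi⟩) = 0 := by
  have hcol : (if (⟨i.1, hi⟩ : Fin 2) = 0 then 0 else 1) = i.1 := by
    split_ifs with h0 <;> simp only [Fin.ext_iff, Fin.val_zero] at h0 <;> omega
  refine ⟨?_, fun i' hi' => ?_⟩
  · rw [Matrix.fromCols_apply_inr, Matrix.of_apply, hcol, if_pos rfl]
    exact one_ne_zero
  · have hi' : i.1 < i'.1 := hi'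
    rw [Matrix.fromCols_apply_inr, Matrix.of_apply, hcol, if_neg (by omega)]

/-- For `n ≥ 3` and `X ∈ Sym(C_n)` (symmetric, off-diagonal entry `(i,j)` nonzero iff
`i - j ≡ ±1 (mod n)`, free diagonal), deleting rows 1 and 2 from `X - λI` always
leaves rank `n-2`; consequently `(X, [e_1, e_2])` is controllable for all
`X ∈ Sym(C_n)`. Vertices `1,…,n` are represented by `Fin n`. -/
theorem stmt19 (n : ℕ) (X : Matrix (Fin n) (Fin n) ℝ)
    (hedge : ∀ a b : Fin n, ((a.1 + 1) % n = b.1 ∨ (b.1 + 1) % n = a.1) → X a b ≠ 0)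
    (hnonedge : ∀ a b : Fin n, a ≠ b →
      ¬((a.1 + 1) % n = b.1 ∨ (b.1 + 1) % n = a.1) → X a b = 0) :
    (∀ μ : ℂ,
      (Matrix.of fun (r : Fin (n - 2)) (c : Fin n) =>
        (X.map Complex.ofReal - μ • 1) ⟨r.1 + 2, by have := r.2; omega⟩ c).rank
        = n - 2) ∧
    (∀ μ : ℂ,
      (Matrix.fromCols (X.map Complex.ofReal - μ • 1)
        (Matrix.of fun (r : Fin n) (c : Fin 2) =>
          if r.1 = (if c = 0 then 0 else 1) then (1 : ℂ) else 0)).rank = n) := by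
  have pivot := cycle_sub_smul_one_pivot hedge hnonedge
  refine ⟨fun μ => ?_, fun μ => ?_⟩
  · refine (Matrix.linearIndependent_row_of_exists_pivot _ fun r => ?_).rank_matrix.trans
      (Fintype.card_fin _)
    have hr := r.2
    obtain ⟨hne, hzero⟩ :=
      pivot μ (a := ⟨r.1 + 2, by omega⟩) (b := ⟨r.1 + 1, by omega⟩) (by dsimp only; omega) rfl
    exact ⟨⟨r.1 + 1, by omega⟩, hne, fun r' hr' =>
      hzero _ (Fin.mk_lt_mk.mpr (Nat.add_lt_add_right hr' 2))⟩
  · refine (Matrix.linearIndependent_row_of_exists_pivot _ fun i => ?_).rank_matrix.trans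
      (Fintype.card_fin _)
    by_cases hi : i.1 < 2
    · exact ⟨_, fromCols_first_two_basis_pivot _ hi⟩
    · obtain ⟨hne, hzero⟩ :=
        pivot μ (a := i) (b := ⟨i.1 - 1, by omega⟩) (by dsimp only; omega) (by dsimp only; omega)
      exact ⟨.inl ⟨i.1 - 1, by omega⟩, hne, hzero⟩
end
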